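/- arXiv:1107.4764 — 4 statements merged into one kernel-verified Lean document; each statement's English description precedes it below -/
import Mathlib

section
/- For a commutative G-graded ring R, the category of G-graded R-modules with degree-zero morphisms is equivalent to the category of additive functors from the companion category C_R to abelian groups, where C_R has objects the elements of G and Hom(g, h) = R_{h-g} with composition given by multiplication. -/
open CategoryTheory

universe u

section
variable {G : Type u} {R : Type u} [AddCommGroup G] [DecidableEq G] [CommRing R]

/-- The companion category `C_R` of a `G`-graded ring `R`: objects are the elements
of `G` and `Hom(g, h) = R_{h-g}`, with composition given by multiplication in `R`. -/
structure Companion (𝒜 : G → AddSubgroup R) : Type u where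
  deg : G

variable (𝒜 : G → AddSubgroup R) [GradedRing 𝒜]

instance : Category (Companion 𝒜) where
  Hom a b := 𝒜 (b.deg - a.deg)
  id a := ⟨(1 : R), by rw [sub_self]; exact SetLike.one_mem_graded 𝒜⟩
  comp {a b c} f g := ⟨g.1 * f.1, by
    have := SetLike.mul_mem_graded g.2 f.2
    rwa [show c.deg - b.deg + (b.deg - a.deg) = c.deg - a.deg by abel] at this⟩
  id_comp f := Subtype.ext (mul_one _)
  comp_id f := Subtype.ext (one_mul _)
  assoc f g h := Subtype.ext (mul_assoc _ _ _).symm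

instance : Preadditive (Companion 𝒜) where
  homGroup a b := inferInstanceAs (AddCommGroup (𝒜 (b.deg - a.deg)))
  add_comp := by intros; exact Subtype.ext (mul_add _ _ _)
  comp_add := by intros; exact Subtype.ext (add_mul _ _ _)

/-- The category of `G`-graded `R`-modules with degree-zero `R`-linear maps. -/
structure GrMod (𝒜 : G → AddSubgroup R) [GradedRing 𝒜] : Type (u + 1) where
  M : Type u
  [acg : AddCommGroup M]
  [mod : Module R M]
  gr : G → AddSubgroup M
  [dec : DirectSum.Decomposition gr]
  smul_mem : ∀ (g h : G) (r : R) (m : M), r ∈ 𝒜 g → m ∈ gr h → r • m ∈ gr (g + h)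

attribute [instance] GrMod.acg GrMod.mod GrMod.dec

instance : Category (GrMod 𝒜) where
  Hom X Y := {f : X.M →ₗ[R] Y.M // ∀ (g : G) (m : X.M), m ∈ X.gr g → f m ∈ Y.gr g}
  id X := ⟨LinearMap.id, fun _ _ hm => hm⟩
  comp f g := ⟨g.1.comp f.1, fun _ _ hm => g.2 _ _ (f.2 _ _ hm)⟩
  id_comp f := Subtype.ext (LinearMap.id_comp f.1)
  comp_id f := Subtype.ext (LinearMap.comp_id f.1)
  assoc f g h := Subtype.ext (LinearMap.comp_assoc _ _ _).symm

set_option maxHeartbeats 1000000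
set_option synthInstance.maxHeartbeats 1000000

namespace Stmt2Aux

open DirectSum

variable {G : Type u} {R : Type u} [AddCommGroup G] [DecidableEq G] [CommRing R]
variable (𝒜 : G → AddSubgroup R) [GradedRing 𝒜]

/-- The functor `C_R ⥤ Ab` associated to a graded module. -/
def toFunObj (X : GrMod 𝒜) : Companion 𝒜 ⥤ AddCommGrpCat.{u} where
  obj g := AddCommGrpCat.of (X.gr g.deg)
  map {a b} f := AddCommGrpCat.ofHom
    { toFun := fun m => ⟨f.1 • m.1, by
        have := X.smul_mem _ _ _ _ f.2 m.2
        rwa [sub_add_cancel] at this⟩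
      map_zero' := Subtype.ext (smul_zero _)
      map_add' := fun x y => Subtype.ext (smul_add _ _ _) }
  map_id a := by
    ext m
    exact one_smul R m.1
  map_comp {a b c} f g := by
    ext m
    exact mul_smul _ _ _

instance (X : GrMod 𝒜) : (toFunObj 𝒜 X).Additive where
  map_add {a b f g} := by
    ext m
    exact Subtype.ext (add_smul _ _ _)

/-- The functor from graded modules to additive functors. -/
def Φ : GrMod 𝒜 ⥤ (Companion 𝒜 ⥤+ AddCommGrpCat.{u}) where
  obj X := CategoryTheory.AdditiveFunctor.of (toFunObj 𝒜 X)
  map {X Y} φ := InducedCategory.homMk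
    { app := fun g => AddCommGrpCat.ofHom
        { toFun := fun m => ⟨φ.1 m.1, φ.2 _ _ m.2⟩
          map_zero' := Subtype.ext (map_zero φ.1)
          map_add' := fun x y => Subtype.ext (map_add φ.1 _ _) }
      naturality := fun a b f => by
        ext m
        exact Subtype.ext (φ.1.map_smul _ _) }
  map_id X := by
    apply InducedCategory.hom_ext
    refine NatTrans.ext (funext fun g => ?_)
    ext m
    rfl
  map_comp f g := by
    apply InducedCategory.hom_ext
    refine NatTrans.ext (funext fun a => ?_)
    ext m
    rfl


instance : (Φ 𝒜).Faithful where
  map_injective {X Y φ ψ} h := by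
    refine Subtype.ext (LinearMap.ext fun m => ?_)
    induction m using DirectSum.Decomposition.inductionOn X.gr with
    | zero => simp
    | @homogeneous i m =>
        have := congrArg (fun (η : (Φ 𝒜).obj X ⟶ (Φ 𝒜).obj Y) => (η.hom.app ⟨i⟩ m).1) h
        exact this
    | add m m' hm hm' => simp [map_add, hm, hm']


set_option synthInstance.maxHeartbeats 1000000 in
set_option maxHeartbeats 1000000 in
instance : (Φ 𝒜).Full where
  map_surjective {X Y} η := by
    classical
    set f0 : X.M →+ Y.M :=
      (DirectSum.toAddMonoid fun g => ((Y.gr g).subtype.comp (η.hom.app ⟨g⟩).hom)).comp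
        (DirectSum.decomposeAddEquiv X.gr).toAddMonoidHom with hf0def
    have hf0 : ∀ (g : G) (m : X.M) (hm : m ∈ X.gr g), f0 m = ((η.hom.app ⟨g⟩) ⟨m, hm⟩).1 := by
      intro g m hm
      rw [hf0def]
      simp only [AddMonoidHom.comp_apply, AddEquiv.toAddMonoidHom_eq_coe, AddMonoidHom.coe_coe,
        DirectSum.decomposeAddEquiv_apply]
      have h1 : (((DirectSum.decomposeAddEquiv X.gr : X.M ≃+ ⨁ i, X.gr i) :
          X.M →+ ⨁ i, X.gr i) m) = DirectSum.of _ g ⟨m, hm⟩ :=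
        DirectSum.decompose_of_mem X.gr hm
      exact (congrArg (DirectSum.toAddMonoid fun g => ((Y.gr g).subtype.comp (η.hom.app ⟨g⟩).hom)) h1).trans
        (DirectSum.toAddMonoid_of _ _ _)
    have hsm : ∀ (r : R) (m : X.M), f0 (r • m) = r • f0 m := by
      intro r m
      revert r
      induction m using DirectSum.Decomposition.inductionOn X.gr with
      | zero => intro r; simp
      | @homogeneous i m =>
          intro r
          induction r using DirectSum.Decomposition.inductionOn 𝒜 with
          | zero => simp
          | @homogeneous j x =>
              have hmem : x.1 • m.1 ∈ X.gr (j + i) := X.smul_mem _ _ _ _ x.2 m.2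
              rw [hf0 (j + i) _ hmem, hf0 i m.1 m.2]
              have hn := η.hom.naturality (show (⟨i⟩ : Companion 𝒜) ⟶ ⟨j + i⟩ from
                ⟨x.1, by
                  have := x.2
                  rwa [show (Companion.mk (𝒜 := 𝒜) (j + i)).deg - (Companion.mk (𝒜 := 𝒜) i).deg
                      = j by simp]⟩)
              have := congrArg (fun (t : (toFunObj 𝒜 X).obj ⟨i⟩ ⟶ (toFunObj 𝒜 Y).obj ⟨j + i⟩) =>
                (t m).1) hn
              exact this
          | add r r' hr hr' =>
              rw [add_smul, map_add, hr, hr', add_smul]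
      | add m m' hm hm' =>
          intro r
          rw [smul_add, map_add, hm, hm', map_add, smul_add]
    refine ⟨⟨{ toFun := f0, map_add' := f0.map_add, map_smul' := hsm },
      fun g m hm => ?_⟩, ?_⟩
    · show f0 m ∈ Y.gr g
      rw [hf0 g m hm]
      exact ((η.hom.app ⟨g⟩) ⟨m, hm⟩).2
    · apply InducedCategory.hom_ext
      refine NatTrans.ext (funext fun g => ?_)
      ext m
      exact Subtype.ext (hf0 g.deg m.1 m.2)


section Inverse

variable (F : Companion 𝒜 ⥤ AddCommGrpCat.{u}) [F.Additive]

/-- The component types of the inverse construction. -/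
abbrev AF : G → Type u := fun g => ↥(F.obj ⟨g⟩)

/-- The underlying group of the graded module associated to a functor. -/
abbrev MF : Type u := ⨁ g, AF 𝒜 F g

/-- The morphism of `C_R` determined by a homogeneous element. -/
def π (i g : G) (x : 𝒜 i) : (⟨g⟩ : Companion 𝒜) ⟶ ⟨i + g⟩ :=
  ⟨x.1, by
    have := x.2
    rwa [show (Companion.mk (𝒜 := 𝒜) (i + g)).deg - (Companion.mk (𝒜 := 𝒜) g).deg = i by
      show i + g - g = i; rw [add_sub_cancel_right]]⟩

/-- cast lemma -/
lemma of_map_eq {g h h' : G} (e : h = h') (f : (⟨g⟩ : Companion 𝒜) ⟶ ⟨h⟩)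
    (f' : (⟨g⟩ : Companion 𝒜) ⟶ ⟨h'⟩) (hf : f.1 = f'.1) (m : AF 𝒜 F g) :
    DirectSum.of (AF 𝒜 F) h' (F.map f' m) = DirectSum.of (AF 𝒜 F) h (F.map f m) := by
  subst e
  obtain rfl : f = f' := Subtype.ext hf
  rfl

/-- The action of a homogeneous element. -/
def hsmul (i : G) : 𝒜 i →+ (MF 𝒜 F →+ MF 𝒜 F) where
  toFun x := DirectSum.toAddMonoid fun g =>
    (DirectSum.of (AF 𝒜 F) (i + g)).comp (F.map (π 𝒜 i g x)).hom
  map_zero' := by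
    refine DirectSum.addHom_ext fun g m => ?_
    have h0 : π 𝒜 i g (0 : 𝒜 i) = 0 := Subtype.ext rfl
    simp [DirectSum.toAddMonoid_of, h0]
  map_add' x y := by
    refine DirectSum.addHom_ext fun g m => ?_
    have h0 : π 𝒜 i g (x + y) = π 𝒜 i g x + π 𝒜 i g y := Subtype.ext rfl
    simp [DirectSum.toAddMonoid_of, h0]

/-- The scalar action of `R`. -/
def smulHom : R →+ (MF 𝒜 F →+ MF 𝒜 F) :=
  (DirectSum.toAddMonoid (hsmul 𝒜 F)).comp
    ((DirectSum.decomposeAddEquiv 𝒜 : R ≃+ ⨁ i, 𝒜 i) : R →+ ⨁ i, 𝒜 i)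

lemma smulHom_of {i : G} {x : R} (hx : x ∈ 𝒜 i) (g : G) (m : AF 𝒜 F g) :
    smulHom 𝒜 F x (DirectSum.of (AF 𝒜 F) g m)
      = DirectSum.of (AF 𝒜 F) (i + g) (F.map (π 𝒜 i g ⟨x, hx⟩) m) := by
  unfold smulHom
  rw [AddMonoidHom.comp_apply]
  have h1 : (((DirectSum.decomposeAddEquiv 𝒜 : R ≃+ ⨁ i, 𝒜 i) :
      R →+ ⨁ i, 𝒜 i) x) = DirectSum.of _ i ⟨x, hx⟩ :=
    DirectSum.decompose_of_mem 𝒜 hx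
  erw [h1, DirectSum.toAddMonoid_of]
  rw [hsmul]
  simp [DirectSum.toAddMonoid_of]

lemma smulHom_one : smulHom 𝒜 F 1 = AddMonoidHom.id (MF 𝒜 F) := by
  refine DirectSum.addHom_ext fun g m => ?_
  rw [AddMonoidHom.id_apply, smulHom_of 𝒜 F (SetLike.one_mem_graded 𝒜) g m,
    of_map_eq 𝒜 F (zero_add g).symm (𝟙 (⟨g⟩ : Companion 𝒜))
      (π 𝒜 0 g ⟨1, SetLike.one_mem_graded 𝒜⟩) rfl m, CategoryTheory.Functor.map_id]
  rfl

lemma smulHom_mul (r s : R) :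
    smulHom 𝒜 F (r * s) = (smulHom 𝒜 F r).comp (smulHom 𝒜 F s) := by
  induction r using DirectSum.Decomposition.inductionOn 𝒜 with
  | zero => simp [zero_mul]
  | @homogeneous j x =>
      induction s using DirectSum.Decomposition.inductionOn 𝒜 with
      | zero => simp [mul_zero]
      | @homogeneous i y =>
          refine DirectSum.addHom_ext fun g m => ?_
          rw [AddMonoidHom.comp_apply,
            smulHom_of 𝒜 F (SetLike.mul_mem_graded x.2 y.2) g m,
            smulHom_of 𝒜 F y.2 g m, smulHom_of 𝒜 F x.2 (i + g) (F.map (π 𝒜 i g y) m)]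
          rw [show (F.map (π 𝒜 j (i + g) x)) ((F.map (π 𝒜 i g y)) m)
              = F.map (π 𝒜 i g y ≫ π 𝒜 j (i + g) x) m by
            rw [CategoryTheory.Functor.map_comp]; rfl]
          exact of_map_eq 𝒜 F (add_assoc j i g).symm _ _ rfl m
      | add s s' hs hs' =>
          rw [mul_add, map_add, map_add, hs, hs', AddMonoidHom.comp_add]
  | add r r' hr hr' =>
      rw [add_mul, map_add, map_add, hr, hr', AddMonoidHom.add_comp]

/-- The module structure. -/
def mMod : Module R (MF 𝒜 F) where
  smul r m := smulHom 𝒜 F r m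
  one_smul m := DFunLike.congr_fun (smulHom_one 𝒜 F) m
  mul_smul r s m := DFunLike.congr_fun (smulHom_mul 𝒜 F r s) m
  smul_zero r := (smulHom 𝒜 F r).map_zero
  smul_add r m m' := (smulHom 𝒜 F r).map_add m m'
  add_smul r s m := DFunLike.congr_fun ((smulHom 𝒜 F).map_add r s) m
  zero_smul m := DFunLike.congr_fun ((smulHom 𝒜 F).map_zero) m

/-- The grading. -/
def grF (g : G) : AddSubgroup (MF 𝒜 F) := (DirectSum.of (AF 𝒜 F) g).range

/-- The additive equivalence onto a graded piece. -/
noncomputable def eg (g : G) : AF 𝒜 F g ≃+ ↥(grF 𝒜 F g) :=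
  AddMonoidHom.ofInjective (DirectSum.of_injective (β := AF 𝒜 F) g)

lemma eg_apply (g : G) (m : AF 𝒜 F g) :
    (eg 𝒜 F g m).1 = DirectSum.of (AF 𝒜 F) g m :=
  AddMonoidHom.ofInjective_apply _

/-- The decomposition. -/
noncomputable def decF : DirectSum.Decomposition (grF 𝒜 F) :=
  DirectSum.Decomposition.ofAddHom (grF 𝒜 F)
    (DirectSum.toAddMonoid fun g =>
      (DirectSum.of (fun g => ↥(grF 𝒜 F g)) g).comp (eg 𝒜 F g).toAddMonoidHom)
    (by
      refine DirectSum.addHom_ext fun g m => ?_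
      simp only [AddMonoidHom.comp_apply, AddMonoidHom.id_apply, DirectSum.toAddMonoid_of,
        AddEquiv.toAddMonoidHom_eq_coe, AddMonoidHom.coe_coe]
      rw [DirectSum.coeAddMonoidHom_of]
      exact eg_apply 𝒜 F g m)
    (by
      refine DirectSum.addHom_ext fun g x => ?_
      obtain ⟨m, hm⟩ := x.2
      simp only [AddMonoidHom.comp_apply, AddMonoidHom.id_apply]
      rw [DirectSum.coeAddMonoidHom_of]
      have : x.1 = DirectSum.of (AF 𝒜 F) g m := hm.symm
      rw [this, DirectSum.toAddMonoid_of]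
      simp only [AddMonoidHom.comp_apply, AddEquiv.toAddMonoidHom_eq_coe, AddMonoidHom.coe_coe]
      congr 1
      refine Subtype.ext ?_
      rw [eg_apply, ← this])

/-- The graded module associated to an additive functor. -/
noncomputable def invObj : GrMod 𝒜 where
  M := MF 𝒜 F
  acg := inferInstance
  mod := mMod 𝒜 F
  gr := grF 𝒜 F
  dec := decF 𝒜 F
  smul_mem i g r m hr hm := by
    obtain ⟨m₀, rfl⟩ := hm
    show smulHom 𝒜 F r (DirectSum.of (AF 𝒜 F) g m₀) ∈ grF 𝒜 F (i + g)
    rw [smulHom_of 𝒜 F hr g m₀]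
    exact ⟨_, rfl⟩

/-- The comparison isomorphism. -/
noncomputable def invIso : toFunObj 𝒜 (invObj 𝒜 F) ≅ F :=
  CategoryTheory.NatIso.ofComponents
    (fun g =>
      { hom := (show AddCommGrpCat.of ↥(grF 𝒜 F g.deg) ⟶ F.obj ⟨g.deg⟩ from
          AddCommGrpCat.ofHom (eg 𝒜 F g.deg).symm.toAddMonoidHom)
        inv := (show F.obj ⟨g.deg⟩ ⟶ AddCommGrpCat.of ↥(grF 𝒜 F g.deg) from
          AddCommGrpCat.ofHom (eg 𝒜 F g.deg).toAddMonoidHom)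
        hom_inv_id := by
          ext x
          exact (eg 𝒜 F g.deg).apply_symm_apply x
        inv_hom_id := by
          ext m
          exact (eg 𝒜 F g.deg).symm_apply_apply m })
    (by
      intro a b f
      ext x
      show (eg 𝒜 F b.deg).symm ((toFunObj 𝒜 (invObj 𝒜 F)).map f x)
          = F.map f ((eg 𝒜 F a.deg).symm x)
      apply (eg 𝒜 F b.deg).injective
      erw [AddEquiv.apply_symm_apply]
      refine Subtype.ext ?_
      rw [eg_apply]
      show smulHom 𝒜 F f.1 x.1 = DirectSum.of (AF 𝒜 F) b.deg (F.map f ((eg 𝒜 F a.deg).symm x))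
      have hx : x.1 = DirectSum.of (AF 𝒜 F) a.deg ((eg 𝒜 F a.deg).symm x) := by
        rw [← eg_apply]
        exact congrArg Subtype.val ((eg 𝒜 F a.deg).apply_symm_apply x).symm
      rw [hx, smulHom_of 𝒜 F f.2 a.deg ((eg 𝒜 F a.deg).symm x)]
      exact of_map_eq 𝒜 F (sub_add_cancel b.deg a.deg).symm f
        (π 𝒜 (b.deg - a.deg) a.deg ⟨f.1, f.2⟩) rfl _)

instance : (Φ 𝒜).EssSurj where
  mem_essImage Y :=
    ⟨invObj 𝒜 Y.1,
      ⟨(CategoryTheory.ObjectProperty.ι _).preimageIso (invIso 𝒜 Y.1)⟩⟩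

instance : (Φ 𝒜).IsEquivalence := {}

end Inverse

end Stmt2Aux
/-- for a commutative `G`-graded ring `R`, the category of `G`-graded
`R`-modules with degree-zero morphisms is equivalent to the category of additive
functors from the companion category `C_R` to abelian groups. -/
theorem stmt2 : Nonempty (GrMod 𝒜 ≌ (Companion 𝒜 ⥤+ AddCommGrpCat.{u})) := by
  exact ⟨(Stmt2Aux.Φ 𝒜).asEquivalence⟩

end
end

section
/- Let R be a commutative G-graded noetherian ring and C a compact object of the derived category of graded R-modules. Then ssupp(C) = {p ∈ Spec^h R : k(p) ⊗^L C ≠ 0} equals the closed set V(Ann_R H*(C)) and in particular is a closed subset of Spec^h R. -/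
open TensorProduct

/-- A (cochain) complex of `G`-graded `R`-modules, given by raw data: graded modules
`X i` with degree-zero differentials `d i : X i → X (i+1)` squaring to zero. -/
structure GCplx {G R : Type} [AddCommGroup G] [DecidableEq G] [CommRing R]
    (𝒜 : G → AddSubgroup R) [GradedRing 𝒜] where
  X : ℤ → Type
  [acg : ∀ i, AddCommGroup (X i)]
  [mod : ∀ i, Module R (X i)]
  gr : ∀ i, G → AddSubgroup (X i)
  [dec : ∀ i, DirectSum.Decomposition (gr i)]
  smul_mem : ∀ (i : ℤ) (g h : G) (r : R) (m : X i),
    r ∈ 𝒜 g → m ∈ gr i h → r • m ∈ gr i (g + h)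
  d : ∀ i, X i →ₗ[R] X (i + 1)
  dd : ∀ (i : ℤ) (m : X i), d (i + 1) (d i m) = 0
  d_gr : ∀ (i : ℤ) (g : G) (m : X i), m ∈ gr i g → d i m ∈ gr (i + 1) g

attribute [instance] GCplx.acg GCplx.mod GCplx.dec




section DetTrick

variable {R : Type} [CommRing R] {M : Type} [AddCommGroup M] [Module R M]

lemma det_smul_eq_zero {n : ℕ} (B : Matrix (Fin n) (Fin n) R) (z : Fin n → M)
    (hrel : ∀ k, ∑ l, B k l • z l = 0) (i : Fin n) : B.det • z i = 0 := by
  have key : ∑ l, ((Matrix.adjugate B * B) i l) • z l = B.det • z i := by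
    rw [Matrix.adjugate_mul]
    have h1 : ∀ l, ((B.det • (1 : Matrix (Fin n) (Fin n) R)) i l) • z l
        = if i = l then B.det • z l else 0 := by
      intro l
      by_cases h : i = l <;> simp [Matrix.smul_apply, Matrix.one_apply, h]
    rw [Finset.sum_congr rfl fun l _ => h1 l]
    simp
  rw [← key]
  have h2 : ∀ l, ((Matrix.adjugate B * B) i l) • z l
      = ∑ m, Matrix.adjugate B i m • (B m l • z l) := by
    intro l; rw [Matrix.mul_apply, Finset.sum_smul]
    exact Finset.sum_congr rfl fun m _ => by rw [mul_smul]
  rw [Finset.sum_congr rfl fun l _ => h2 l, Finset.sum_comm]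
  simp_rw [← Finset.smul_sum]
  simp [hrel]

end DetTrick

section Graded

variable {G : Type} [AddCommGroup G] [DecidableEq G]

lemma decompose_map_comm {M N : Type} [AddCommGroup M] [AddCommGroup N]
    (ℳ : G → AddSubgroup M) (𝒩 : G → AddSubgroup N)
    [DirectSum.Decomposition ℳ] [DirectSum.Decomposition 𝒩]
    (f : M →+ N) (hf : ∀ g m, m ∈ ℳ g → f m ∈ 𝒩 g) (g : G) (x : M) :
    ((DirectSum.decompose 𝒩 (f x) g : N)) = f (DirectSum.decompose ℳ x g : M) := by
  revert x
  refine DirectSum.Decomposition.inductionOn ℳ ?_ ?_ ?_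
  · simp
  · intro h m
    by_cases hgh : h = g
    · subst hgh
      rw [DirectSum.decompose_of_mem_same ℳ m.2, DirectSum.decompose_of_mem_same 𝒩 (hf _ _ m.2)]
    · rw [DirectSum.decompose_of_mem_ne ℳ m.2 hgh,
        DirectSum.decompose_of_mem_ne 𝒩 (hf _ _ m.2) hgh, map_zero]
  · intro m m' hm hm'
    rw [map_add, DirectSum.decompose_add, DirectSum.decompose_add, DirectSum.add_apply,
      DirectSum.add_apply, AddSubgroup.coe_add, AddSubgroup.coe_add, hm, hm', map_add]

variable {R : Type} [CommRing R] (𝒜 : G → AddSubgroup R) [GradedRing 𝒜] (C : GCplx 𝒜)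

lemma decompose_smul_comm (i : ℤ) {h : G} {x : C.X i} (hx : x ∈ C.gr i h) (g : G) (r : R) :
    (DirectSum.decompose (C.gr i) (r • x) (g + h) : C.X i)
      = (DirectSum.decompose 𝒜 r g : R) • x := by
  revert r
  refine DirectSum.Decomposition.inductionOn 𝒜 ?_ ?_ ?_
  · simp
  · intro g' r'
    by_cases hg : g' = g
    · subst hg
      rw [DirectSum.decompose_of_mem_same 𝒜 r'.2,
        DirectSum.decompose_of_mem_same (C.gr i) (C.smul_mem i g' h r' x r'.2 hx)]
    · rw [DirectSum.decompose_of_mem_ne 𝒜 r'.2 hg,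
        DirectSum.decompose_of_mem_ne (C.gr i) (C.smul_mem i g' h r' x r'.2 hx)
          (fun e => hg (by exact add_right_cancel e)), zero_smul]
  · intro r r' h1 h2
    rw [add_smul, DirectSum.decompose_add, DirectSum.decompose_add, DirectSum.add_apply,
      DirectSum.add_apply, AddSubgroup.coe_add, AddSubgroup.coe_add, h1, h2, add_smul]

lemma annset_decompose {r : R}
    (hr : ∀ (i : ℤ) (x : C.X (i + 1)), C.d (i + 1) x = 0 → ∃ y : C.X i, C.d i y = r • x)
    (g : G) (i : ℤ) (x : C.X (i + 1)) (hx : C.d (i + 1) x = 0) :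
    ∃ y : C.X i, C.d i y = (DirectSum.decompose 𝒜 r g : R) • x := by
  classical
  have hcoc : ∀ h : G, C.d (i+1) (DirectSum.decompose (C.gr (i+1)) x h : C.X (i+1)) = 0 := by
    intro h
    have hcm := decompose_map_comm (C.gr (i+1)) (C.gr (i+1+1)) (C.d (i+1)).toAddMonoidHom
      (C.d_gr (i+1)) h x
    rw [LinearMap.toAddMonoidHom_coe] at hcm
    rw [← hcm, hx]
    simp
  choose y hy using fun h : G => hr i _ (hcoc h)
  refine ⟨∑ h ∈ (DirectSum.decompose (C.gr (i+1)) x).support,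
    (DirectSum.decompose (C.gr i) (y h) (g + h) : C.X i), ?_⟩
  rw [map_sum]
  have step : ∀ h : G, C.d i (DirectSum.decompose (C.gr i) (y h) (g + h) : C.X i)
      = (DirectSum.decompose 𝒜 r g : R) • (DirectSum.decompose (C.gr (i+1)) x h : C.X (i+1)) := by
    intro h
    have hcm := decompose_map_comm (C.gr i) (C.gr (i+1)) (C.d i).toAddMonoidHom
      (C.d_gr i) (g + h) (y h)
    rw [LinearMap.toAddMonoidHom_coe] at hcm
    rw [← hcm, hy h, decompose_smul_comm 𝒜 C (i+1) (SetLike.coe_mem _) g r]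
  rw [Finset.sum_congr rfl fun h _ => step h, ← Finset.smul_sum]
  congr 1
  exact DirectSum.sum_support_decompose _ x
section Engine

variable {G R : Type} [AddCommGroup G] [DecidableEq G] [CommRing R]
  {𝒜 : G → AddSubgroup R} [GradedRing 𝒜] (C : GCplx 𝒜)

lemma GCplx.engine (M : Submonoid R) {a b : ℤ}
    (hbdd : ∀ i : ℤ, (i < a ∨ b < i) → Subsingleton (C.X i))
    (hproj : ∀ i, Module.Projective R (C.X i))
    (H : ∀ (j : ℤ) (s : R), s ∈ M → ∀ h : (∀ i : ℤ, C.X (i+1) →ₗ[R] C.X i),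
      (∀ i, j + 1 ≤ i → (C.d i).comp (h i) + (h (i+1)).comp (C.d (i+1))
        = s • (LinearMap.id : C.X (i+1) →ₗ[R] C.X (i+1))) →
      ∃ r ∈ M, ∀ x : C.X (j+1), C.d (j+1) x = 0 → r • x ∈ LinearMap.range (C.d j)) :
    ∃ s ∈ M, ∃ h : (∀ i : ℤ, C.X (i+1) →ₗ[R] C.X i),
      ∀ i : ℤ, (C.d i).comp (h i) + (h (i+1)).comp (C.d (i+1))
        = s • (LinearMap.id : C.X (i+1) →ₗ[R] C.X (i+1)) := by
  classical
  have aux : ∀ n : ℕ, ∃ s ∈ M, ∃ h : (∀ i : ℤ, C.X (i+1) →ₗ[R] C.X i),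
      ∀ i : ℤ, b - n ≤ i → (C.d i).comp (h i) + (h (i+1)).comp (C.d (i+1))
        = s • (LinearMap.id : C.X (i+1) →ₗ[R] C.X (i+1)) := by
    intro n
    induction n with
    | zero =>
      refine ⟨1, one_mem _, fun _ => 0, fun i hi => ?_⟩
      haveI : Subsingleton (C.X (i+1)) := hbdd (i+1) (Or.inr (by omega))
      exact LinearMap.ext fun x => Subsingleton.elim _ _
    | succ n ih =>
      obtain ⟨s, hs, h, hh⟩ := ih
      set j : ℤ := b - (n+1 : ℕ) with hj
      obtain ⟨r, hr, hrZ⟩ := H j s hs h (fun i hi => hh i (by omega))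
      set w : C.X (j+1) →ₗ[R] C.X (j+1) :=
        s • (LinearMap.id : C.X (j+1) →ₗ[R] C.X (j+1)) - (h (j+1)).comp (C.d (j+1)) with hw
      have hwcoc : ∀ x : C.X (j+1), C.d (j+1) (w x) = 0 := by
        intro x
        have e := LinearMap.congr_fun (hh (j+1) (by omega)) (C.d (j+1) x)
        simp only [LinearMap.add_apply, LinearMap.coe_comp, Function.comp_apply,
          LinearMap.smul_apply, LinearMap.id_apply, C.dd (j+1) x, map_zero, add_zero] at e
        rw [hw]
        simp only [LinearMap.sub_apply, LinearMap.smul_apply, LinearMap.id_apply,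
          LinearMap.coe_comp, Function.comp_apply, map_sub, map_smul]
        rw [e]
        simp
      haveI := hproj (j+1)
      obtain ⟨h₀, hh₀⟩ := Module.projective_lifting_property ((C.d j).rangeRestrict)
        (LinearMap.codRestrict (LinearMap.range (C.d j)) (r • w)
          (fun x => by simpa using hrZ (w x) (hwcoc x)))
        (LinearMap.surjective_rangeRestrict _)
      have hcomp : (C.d j).comp h₀ = r • w := by
        ext x
        have e := LinearMap.congr_fun hh₀ x
        have e2 := congrArg (Subtype.val) e
        simpa using e2
      refine ⟨r * s, mul_mem hr hs, Function.update (fun i => r • h i) j h₀, fun i hi => ?_⟩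
      rcases eq_or_lt_of_le hi with heq | hlt
      · have hij : i = j := heq.symm
        subst hij
        rw [Function.update_self, Function.update_of_ne (by omega)]
        rw [hcomp, LinearMap.smul_comp]
        rw [hw]
        ext x
        simp only [LinearMap.add_apply, LinearMap.smul_apply, LinearMap.sub_apply,
          LinearMap.id_apply, LinearMap.coe_comp, Function.comp_apply, mul_smul]
        rw [smul_sub]
        abel
      · rw [Function.update_of_ne (by omega), Function.update_of_ne (by omega)]
        have e := hh i (by omega)
        rw [LinearMap.smul_comp, LinearMap.comp_smul, ← smul_add, e]
        ext x
        simp [mul_smul]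
  obtain ⟨s, hs, h, hh⟩ := aux (b + 1 - a).toNat
  refine ⟨s, hs, h, fun i => ?_⟩
  by_cases hi : b - (b + 1 - a).toNat ≤ i
  · exact hh i hi
  · haveI : Subsingleton (C.X (i+1)) := by
      refine hbdd (i+1) (Or.inl ?_)
      have := Int.self_le_toNat (b + 1 - a)
      omega
    exact LinearMap.ext fun x => Subsingleton.elim _ _

end Engine

section Key1

variable {G R : Type} [AddCommGroup G] [DecidableEq G] [CommRing R]
  {𝒜 : G → AddSubgroup R} [GradedRing 𝒜] (C : GCplx 𝒜)

set_option synthInstance.maxHeartbeats 1000000 in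
set_option maxHeartbeats 2000000 in
lemma GCplx.key1 (Sp : Submonoid R) (P : Ideal R) {s : R} (hs : s ∈ Sp)
    (h : ∀ i : ℤ, C.X (i+1) →ₗ[R] C.X i)
    (hh : ∀ i : ℤ, (C.d i).comp (h i) + (h (i+1)).comp (C.d (i+1))
      = s • (LinearMap.id : C.X (i+1) →ₗ[R] C.X (i+1))) (i : ℤ) :
    Function.Exact
      (LinearMap.lTensor (Localization Sp ⧸ Ideal.map (algebraMap R (Localization Sp)) P) (C.d i))
      (LinearMap.lTensor (Localization Sp ⧸ Ideal.map (algebraMap R (Localization Sp)) P)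
        (C.d (i+1))) := by
  set k := Localization Sp ⧸ Ideal.map (algebraMap R (Localization Sp)) P with hk
  have hb : ∀ (j : ℤ) (θ : k ⊗[R] C.X j),
      LinearMap.lTensor k (C.d j) θ = (C.d j).baseChange k θ := fun j θ => by
    rw [LinearMap.baseChange_eq_ltensor]
  intro z
  constructor
  · intro hz
    have E : (LinearMap.lTensor k (C.d i)).comp (LinearMap.lTensor k (h i))
        + (LinearMap.lTensor k (h (i+1))).comp (LinearMap.lTensor k (C.d (i+1)))
        = s • (LinearMap.id : k ⊗[R] C.X (i+1) →ₗ[R] k ⊗[R] C.X (i+1)) := by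
      rw [← LinearMap.lTensor_comp, ← LinearMap.lTensor_comp, ← LinearMap.lTensor_add,
        hh i, LinearMap.lTensor_smul, LinearMap.lTensor_id]
    have E2 := LinearMap.congr_fun E z
    simp only [LinearMap.add_apply, LinearMap.coe_comp, Function.comp_apply,
      LinearMap.smul_apply, LinearMap.id_apply, hz, map_zero, add_zero] at E2
    have hu : IsUnit (algebraMap R k s) := by
      have h1 : IsUnit (algebraMap R (Localization Sp) s) :=
        IsLocalization.map_units (M := Sp) _ ⟨s, hs⟩
      have h2 : algebraMap R k s
          = (Ideal.Quotient.mk (Ideal.map (algebraMap R (Localization Sp)) P))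
            (algebraMap R (Localization Sp) s) := rfl
      rw [h2]
      exact h1.map _
    obtain ⟨u, hu⟩ := hu
    refine ⟨((u⁻¹ : (Localization Sp ⧸ Ideal.map (algebraMap R (Localization Sp)) P)ˣ) : k)
      • (LinearMap.lTensor k (h i) z), ?_⟩
    rw [hb, map_smul, ← hb]
    rw [show LinearMap.lTensor k (C.d (i+1)) z = 0 from hz, map_zero, add_zero] at E2
    rw [E2]
    rw [← algebraMap_smul k s z, ← hu, ← smul_assoc]
    simp
  · rintro ⟨w, rfl⟩
    have e : (LinearMap.lTensor k (C.d (i+1))).comp (LinearMap.lTensor k (C.d i)) = 0 := by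
      rw [← LinearMap.lTensor_comp,
        show (C.d (i+1)).comp (C.d i) = 0 from LinearMap.ext (C.dd i), LinearMap.lTensor_zero]
    exact LinearMap.congr_fun e w

end Key1

section LocHelpers

variable {R : Type} [CommRing R] (Sp : Submonoid R)

lemma one_tmul_eq_zero {M : Type} [AddCommGroup M] [Module R M] (v : M)
    (hv : (1 : Localization Sp) ⊗ₜ[R] v = 0) : ∃ u : Sp, (u : R) • v = 0 := by
  have hbc : IsBaseChange (Localization Sp) (LocalizedModule.mkLinearMap Sp M) :=
    (isLocalizedModule_iff_isBaseChange Sp (Localization Sp) _).mp inferInstance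
  have h1 := hbc.equiv_tmul 1 v
  rw [hv, map_zero, one_smul, LocalizedModule.mkLinearMap_apply] at h1
  have h2 : LocalizedModule.mk v (1 : Sp) = LocalizedModule.mk (0 : M) (1 : Sp) := by
    rw [← h1, LocalizedModule.zero_mk]
  obtain ⟨u, hu⟩ := LocalizedModule.mk_eq.mp h2
  exact ⟨u, by have hu' : u • v = 0 := (by simpa using hu); exact hu'⟩

variable {M N : Type} [AddCommGroup M] [Module R M] [AddCommGroup N] [Module R N]

lemma clear_denom_lTensor (f : M →ₗ[R] N) (ζ : Localization Sp ⊗[R] M) :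
    ∃ (u : Sp) (w : M),
      (u : R) • (LinearMap.lTensor (Localization Sp) f ζ) = (1 : Localization Sp) ⊗ₜ[R] f w := by
  induction ζ using TensorProduct.induction_on with
  | zero => exact ⟨1, 0, by simp⟩
  | tmul a m =>
    obtain ⟨⟨ra, sa⟩, hras⟩ := IsLocalization.surj (M := Sp) a
    refine ⟨sa, ra • m, ?_⟩
    rw [LinearMap.lTensor_tmul, smul_tmul', Algebra.smul_def, mul_comm, hras, map_smul]
    rw [show (algebraMap R (Localization Sp) ra) = ra • (1 : Localization Sp) by
      rw [Algebra.smul_def, mul_one]]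
    rw [smul_tmul]
  | add x y ihx ihy =>
    obtain ⟨ux, wx, hx⟩ := ihx
    obtain ⟨uy, wy, hy⟩ := ihy
    refine ⟨ux * uy, (uy : R) • wx + (ux : R) • wy, ?_⟩
    have t1 : ((ux * uy : Sp) : R) • LinearMap.lTensor (Localization Sp) f x
        = (uy : R) • ((1 : Localization Sp) ⊗ₜ[R] f wx) := by
      rw [Submonoid.coe_mul, mul_comm, mul_smul, hx]
    have t2 : ((ux * uy : Sp) : R) • LinearMap.lTensor (Localization Sp) f y
        = (ux : R) • ((1 : Localization Sp) ⊗ₜ[R] f wy) := by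
      rw [Submonoid.coe_mul, mul_smul, hy]
    rw [map_add, smul_add, t1, t2, map_add, map_smul, map_smul, tmul_add,
      ← tmul_smul, ← tmul_smul]

lemma kernel_part_clear (J : Ideal R) (f : M →ₗ[R] M)
    (η : (Submodule.restrictScalars R
        (Ideal.map (algebraMap R (Localization Sp)) J)) ⊗[R] M) :
    ∃ (u : Sp) (ρ : M), ρ ∈ J • LinearMap.range f ∧
      (u : R) • (LinearMap.rTensor M
          (Submodule.subtype (Submodule.restrictScalars R
            (Ideal.map (algebraMap R (Localization Sp)) J)))
        (LinearMap.lTensor _ f η)) = (1 : Localization Sp) ⊗ₜ[R] ρ := by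
  induction η using TensorProduct.induction_on with
  | zero => exact ⟨1, 0, Submodule.zero_mem _, by simp⟩
  | tmul q m =>
    have hq : (q : Localization Sp) ∈ Ideal.map (algebraMap R (Localization Sp)) J := q.2
    obtain ⟨⟨π, τ⟩, hπτ⟩ := (IsLocalization.mem_map_algebraMap_iff Sp _).mp hq
    refine ⟨τ, (π : R) • f m, Submodule.smul_mem_smul π.2 ⟨m, rfl⟩, ?_⟩
    rw [LinearMap.lTensor_tmul, LinearMap.rTensor_tmul, Submodule.coe_subtype,
      smul_tmul', Algebra.smul_def, mul_comm, hπτ]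
    rw [show (algebraMap R (Localization Sp) (π : R)) = (π : R) • (1 : Localization Sp) by
      rw [Algebra.smul_def, mul_one]]
    rw [smul_tmul]
  | add x y ihx ihy =>
    obtain ⟨ux, ρx, hρx, hx⟩ := ihx
    obtain ⟨uy, ρy, hρy, hy⟩ := ihy
    refine ⟨ux * uy, (uy : R) • ρx + (ux : R) • ρy,
      Submodule.add_mem _ (Submodule.smul_mem _ _ hρx) (Submodule.smul_mem _ _ hρy), ?_⟩
    have t1 : ((ux * uy : Sp) : R) • (LinearMap.rTensor M
          (Submodule.subtype (Submodule.restrictScalars R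
            (Ideal.map (algebraMap R (Localization Sp)) J)))
        (LinearMap.lTensor _ f x)) = (uy : R) • ((1 : Localization Sp) ⊗ₜ[R] ρx) := by
      rw [Submonoid.coe_mul, mul_comm, mul_smul, hx]
    have t2 : ((ux * uy : Sp) : R) • (LinearMap.rTensor M
          (Submodule.subtype (Submodule.restrictScalars R
            (Ideal.map (algebraMap R (Localization Sp)) J)))
        (LinearMap.lTensor _ f y)) = (ux : R) • ((1 : Localization Sp) ⊗ₜ[R] ρy) := by
      rw [Submonoid.coe_mul, mul_smul, hy]
    rw [map_add, map_add, smul_add, t1, t2, tmul_add, ← tmul_smul, ← tmul_smul]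

end LocHelpers

section HStep

variable {G R : Type} [AddCommGroup G] [DecidableEq G] [CommRing R]
  {𝒜 : G → AddSubgroup R} [GradedRing 𝒜] (C : GCplx 𝒜)

set_option synthInstance.maxHeartbeats 1000000 in
set_option maxHeartbeats 4000000 in
lemma GCplx.hstep (Sp : Submonoid R) (J : Ideal R) [hJp : J.IsPrime]
    (hSpJ : ∀ u : Sp, (u : R) ∉ J) (j : ℤ) [Module.Finite R (C.X (j+1))]
    (hex : Function.Exact
      (LinearMap.lTensor (Localization Sp ⧸ Ideal.map (algebraMap R (Localization Sp)) J)
        (C.d j))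
      (LinearMap.lTensor (Localization Sp ⧸ Ideal.map (algebraMap R (Localization Sp)) J)
        (C.d (j+1))))
    {s : R} (hs : s ∉ J)
    (h : ∀ i : ℤ, C.X (i+1) →ₗ[R] C.X i)
    (hh : ∀ i, j + 1 ≤ i → (C.d i).comp (h i) + (h (i+1)).comp (C.d (i+1))
      = s • (LinearMap.id : C.X (i+1) →ₗ[R] C.X (i+1))) :
    ∃ r : R, r ∉ J ∧ ∀ x : C.X (j+1), C.d (j+1) x = 0
      → r • x ∈ LinearMap.range (C.d j) := by
  classical
  set Pr : C.X (j+1) →ₗ[R] C.X (j+1) :=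
    s • LinearMap.id - (h (j+1)).comp (C.d (j+1)) with hPr
  have hPcoc : ∀ x, C.d (j+1) (Pr x) = 0 := by
    intro x
    have e := LinearMap.congr_fun (hh (j+1) (by omega)) (C.d (j+1) x)
    simp only [LinearMap.add_apply, LinearMap.coe_comp, Function.comp_apply,
      LinearMap.smul_apply, LinearMap.id_apply, C.dd (j+1) x, map_zero, add_zero] at e
    rw [hPr]
    simp only [LinearMap.sub_apply, LinearMap.smul_apply, LinearMap.id_apply,
      LinearMap.coe_comp, Function.comp_apply, map_sub, map_smul]
    rw [e]
    simp
  have hPfix : ∀ x, C.d (j+1) x = 0 → Pr x = s • x := by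
    intro x hx
    rw [hPr]
    simp [hx]
  have hPd : Pr.comp (C.d j) = s • (C.d j) := by
    ext y
    rw [hPr]
    simp [C.dd j y]
  have REL : ∀ x : C.X (j+1), C.d (j+1) x = 0 →
      ∃ (u : Sp) (wj : C.X j) (ρ : C.X (j+1)), ρ ∈ J • LinearMap.range Pr ∧
        (u : R) • (s • x) = C.d j wj + ρ := by
    intro x hx
    have hz1 : LinearMap.lTensor
        (Localization Sp ⧸ Ideal.map (algebraMap R (Localization Sp)) J) (C.d (j+1))
        ((1 : Localization Sp ⧸ Ideal.map (algebraMap R (Localization Sp)) J) ⊗ₜ[R] x) = 0 := by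
      rw [LinearMap.lTensor_tmul, hx, tmul_zero]
    obtain ⟨ξ, hξ⟩ := (hex _).mp hz1
    have hmkLsurj : Function.Surjective
        ((Ideal.Quotient.mkₐ R (Ideal.map (algebraMap R (Localization Sp)) J)).toLinearMap
          : Localization Sp →ₗ[R] _) := by
      intro q
      obtain ⟨a, ha⟩ := Ideal.Quotient.mk_surjective q
      exact ⟨a, by simpa using ha⟩
    obtain ⟨ξ', hξ'⟩ := LinearMap.rTensor_surjective (C.X j) hmkLsurj ξ
    have hcomm : (LinearMap.rTensor (C.X (j+1))
          (Ideal.Quotient.mkₐ R (Ideal.map (algebraMap R (Localization Sp)) J)).toLinearMap).comp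
          (LinearMap.lTensor (Localization Sp) (C.d j))
        = (LinearMap.lTensor
            (Localization Sp ⧸ Ideal.map (algebraMap R (Localization Sp)) J) (C.d j)).comp
          (LinearMap.rTensor (C.X j)
            (Ideal.Quotient.mkₐ R (Ideal.map (algebraMap R (Localization Sp)) J)).toLinearMap) := by
      rw [LinearMap.rTensor_comp_lTensor, LinearMap.lTensor_comp_rTensor]
    have hδ : LinearMap.rTensor (C.X (j+1))
        (Ideal.Quotient.mkₐ R (Ideal.map (algebraMap R (Localization Sp)) J)).toLinearMap
        (LinearMap.lTensor (Localization Sp) (C.d j) ξ' - (1 : Localization Sp) ⊗ₜ[R] x) = 0 := by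
      rw [map_sub]
      have e1 := LinearMap.congr_fun hcomm ξ'
      simp only [LinearMap.coe_comp, Function.comp_apply] at e1
      rw [e1, hξ', hξ, LinearMap.rTensor_tmul]
      have hone : (Ideal.Quotient.mkₐ R
          (Ideal.map (algebraMap R (Localization Sp)) J)).toLinearMap (1 : Localization Sp)
          = 1 := by simp
      rw [hone, sub_self]
    have hexactIA : Function.Exact
        ((Submodule.restrictScalars R (Ideal.map (algebraMap R (Localization Sp)) J)).subtype)
        ((Ideal.Quotient.mkₐ R (Ideal.map (algebraMap R (Localization Sp)) J)).toLinearMap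
          : Localization Sp →ₗ[R] _) := by
      intro a
      constructor
      · intro ha0
        have haI : a ∈ Ideal.map (algebraMap R (Localization Sp)) J := by
          simpa [Ideal.Quotient.eq_zero_iff_mem] using ha0
        exact ⟨⟨a, haI⟩, rfl⟩
      · rintro ⟨⟨b, hb⟩, rfl⟩
        simpa [Ideal.Quotient.eq_zero_iff_mem] using hb
    have hex2 := rTensor_exact (C.X (j+1)) hexactIA hmkLsurj
    obtain ⟨η, hη⟩ := (hex2 _).mp hδ
    have hPA1 : LinearMap.lTensor (Localization Sp) Pr ((1 : Localization Sp) ⊗ₜ[R] x)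
        = (1 : Localization Sp) ⊗ₜ[R] (s • x) := by
      rw [LinearMap.lTensor_tmul, hPfix x hx]
    have hPA2 : LinearMap.lTensor (Localization Sp) Pr
          (LinearMap.lTensor (Localization Sp) (C.d j) ξ')
        = LinearMap.lTensor (Localization Sp) (C.d j) (s • ξ') := by
      rw [← LinearMap.comp_apply, ← LinearMap.lTensor_comp, hPd, LinearMap.lTensor_smul,
        LinearMap.smul_apply, map_smul]
    have hPA3 : LinearMap.lTensor (Localization Sp) Pr
        (LinearMap.rTensor (C.X (j+1))
          (Submodule.restrictScalars R (Ideal.map (algebraMap R (Localization Sp)) J)).subtype η)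
        = LinearMap.rTensor (C.X (j+1))
          (Submodule.restrictScalars R (Ideal.map (algebraMap R (Localization Sp)) J)).subtype
          (LinearMap.lTensor _ Pr η) := by
      rw [← LinearMap.comp_apply, ← LinearMap.comp_apply,
        LinearMap.rTensor_comp_lTensor, LinearMap.lTensor_comp_rTensor]
    have hmain : (1 : Localization Sp) ⊗ₜ[R] (s • x)
        = LinearMap.lTensor (Localization Sp) (C.d j) (s • ξ')
          - LinearMap.rTensor (C.X (j+1))
            (Submodule.restrictScalars R (Ideal.map (algebraMap R (Localization Sp)) J)).subtype
            (LinearMap.lTensor _ Pr η) := by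
      rw [← hPA1, ← hPA2, ← hPA3, ← map_sub]
      congr 1
      rw [hη]
      abel
    obtain ⟨u₁, w₁, hw₁⟩ := clear_denom_lTensor Sp (C.d j) (s • ξ')
    obtain ⟨u₂, ρ, hρmem, hρ⟩ := kernel_part_clear Sp J Pr η
    have hEqa : ((u₂ : R) * (u₁ : R)) • (LinearMap.lTensor (Localization Sp) (C.d j) (s • ξ'))
        = (1 : Localization Sp) ⊗ₜ[R] ((u₂ : R) • (C.d j w₁)) := by
      rw [mul_smul, hw₁, tmul_smul]
    have hEqb : ((u₂ : R) * (u₁ : R)) • (LinearMap.rTensor (C.X (j+1))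
          (Submodule.restrictScalars R (Ideal.map (algebraMap R (Localization Sp)) J)).subtype
          (LinearMap.lTensor _ Pr η))
        = (1 : Localization Sp) ⊗ₜ[R] ((u₁ : R) • ρ) := by
      rw [mul_comm, mul_smul, hρ, tmul_smul]
    have hEq : (1 : Localization Sp) ⊗ₜ[R] (((u₂ : R) * (u₁ : R)) • (s • x))
        = (1 : Localization Sp) ⊗ₜ[R] ((u₂ : R) • (C.d j w₁))
          - (1 : Localization Sp) ⊗ₜ[R] ((u₁ : R) • ρ) := by
      rw [tmul_smul, hmain, smul_sub, hEqa, hEqb]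
    have hzero : (1 : Localization Sp) ⊗ₜ[R] (((u₂ : R) * (u₁ : R)) • (s • x)
        - (u₂ : R) • (C.d j w₁) + (u₁ : R) • ρ) = 0 := by
      rw [TensorProduct.tmul_add, TensorProduct.tmul_sub, hEq]
      abel
    obtain ⟨u₃, hu₃⟩ := one_tmul_eq_zero Sp _ hzero
    rw [smul_add, smul_sub] at hu₃
    have hfin : (u₃ : R) • (((u₂ : R) * (u₁ : R)) • (s • x))
        = (u₃ : R) • ((u₂ : R) • (C.d j w₁)) - (u₃ : R) • ((u₁ : R) • ρ) := by
      calc (u₃ : R) • (((u₂ : R) * (u₁ : R)) • (s • x))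
          = ((u₃ : R) • (((u₂ : R) * (u₁ : R)) • (s • x))
              - (u₃ : R) • ((u₂ : R) • (C.d j w₁)) + (u₃ : R) • ((u₁ : R) • ρ))
            + ((u₃ : R) • ((u₂ : R) • (C.d j w₁)) - (u₃ : R) • ((u₁ : R) • ρ)) := by abel
        _ = (u₃ : R) • ((u₂ : R) • (C.d j w₁)) - (u₃ : R) • ((u₁ : R) • ρ) := by
            rw [hu₃, zero_add]
    refine ⟨u₃ * u₂ * u₁, (u₃ : R) • ((u₂ : R) • w₁), -((u₃ : R) • ((u₁ : R) • ρ)), ?_, ?_⟩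
    · exact Submodule.neg_mem _ (Submodule.smul_mem _ _ (Submodule.smul_mem _ _ hρmem))
    · rw [map_smul, map_smul, Submonoid.coe_mul, Submonoid.coe_mul, mul_assoc, mul_smul,
        hfin, sub_eq_add_neg]
  obtain ⟨n, v, hv⟩ := Module.Finite.exists_fin (R := R) (M := C.X (j+1))
  set z : Fin n → C.X (j+1) := fun l => Pr (v l) with hz
  have hzcoc : ∀ l, C.d (j+1) (z l) = 0 := fun l => hPcoc (v l)
  have hrange : LinearMap.range Pr = Submodule.span R (Set.range z) := by
    rw [LinearMap.range_eq_map, ← hv, Submodule.map_span, ← Set.range_comp]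
    rfl
  choose u w ρ hρmem hρeq using fun l => REL (z l) (hzcoc l)
  have hρsum : ∀ l, ∃ cc : Fin n →₀ R, (∀ i, cc i ∈ J)
      ∧ (cc.sum fun i a => a • z i) = ρ l := by
    intro l
    have hm := hρmem l
    rw [hrange] at hm
    obtain ⟨cc, hcc, hsum⟩ := (Submodule.mem_ideal_smul_span_iff_exists_sum J z (ρ l)).mp hm
    exact ⟨cc, hcc, hsum⟩
  choose c hcJ hcsum using hρsum
  set B : Matrix (Fin n) (Fin n) R :=
    fun l i => (if l = i then (u l : R) * s else 0) - c l i with hB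
  have hBrel : ∀ l, ∑ i, B l i • z i = C.d j (w l) := by
    intro l
    have e1 : ∑ i, B l i • z i
        = (∑ i, (if l = i then (u l : R) * s else 0) • z i) - ∑ i, c l i • z i := by
      rw [← Finset.sum_sub_distrib]
      exact Finset.sum_congr rfl fun i _ => by rw [hB, sub_smul]
    have e2' : ∀ i, ((if l = i then (u l : R) * s else 0) • z i)
        = (if l = i then ((u l : R) * s) • z i else 0) := by
      intro i; split <;> simp
    have e2 : (∑ i, (if l = i then (u l : R) * s else 0) • z i) = ((u l : R) * s) • z l := by
      rw [Finset.sum_congr rfl fun i _ => e2' i, Finset.sum_ite_eq]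
      simp
    have e3 : ∑ i, c l i • z i = ρ l := by
      rw [← hcsum l, Finsupp.sum_fintype]
      intro i
      exact zero_smul R (z i)
    rw [e1, e2, e3, mul_smul, hρeq l]
    abel
  have hdet : B.det ∉ J := by
    intro hdetmem
    have hmap : (Ideal.Quotient.mk J) B.det = 0 := Ideal.Quotient.eq_zero_iff_mem.mpr hdetmem
    rw [RingHom.map_det] at hmap
    have hdiag : B.map (Ideal.Quotient.mk J)
        = Matrix.diagonal (fun l => Ideal.Quotient.mk J ((u l : R) * s)) := by
      ext l i
      by_cases hli : l = i
      · subst hli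
        rw [Matrix.map_apply, Matrix.diagonal_apply_eq]
        simp only [hB, if_pos rfl, map_sub]
        rw [Ideal.Quotient.eq_zero_iff_mem.mpr (hcJ l l), sub_zero]
        simp
      · have hBe : B l i = -(c l i) := by rw [hB]; simp [hli]
        rw [Matrix.map_apply, hBe, Matrix.diagonal_apply_ne _ hli, map_neg, neg_eq_zero]
        exact Ideal.Quotient.eq_zero_iff_mem.mpr (hcJ l i)
    rw [RingHom.mapMatrix_apply, hdiag, Matrix.det_diagonal] at hmap
    obtain ⟨l, _, hl⟩ := Finset.prod_eq_zero_iff.mp hmap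
    have hmem : (u l : R) * s ∈ J := Ideal.Quotient.eq_zero_iff_mem.mp hl
    rcases hJp.mem_or_mem hmem with h1 | h2
    · exact hSpJ (u l) h1
    · exact hs h2
  have hdetz : ∀ i, B.det • z i ∈ LinearMap.range (C.d j) := by
    intro i
    have hq := det_smul_eq_zero B
      (fun i => Submodule.Quotient.mk (p := LinearMap.range (C.d j)) (z i))
      (fun l => by
        have : (∑ i, B l i • Submodule.Quotient.mk (p := LinearMap.range (C.d j)) (z i))
            = Submodule.Quotient.mk (p := LinearMap.range (C.d j)) (∑ i, B l i • z i) := by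
          simp only [← Submodule.mkQ_apply, ← map_smul, ← map_sum]
        rw [this, hBrel l]
        exact (Submodule.Quotient.mk_eq_zero _).mpr ⟨w l, rfl⟩) i
    rw [← Submodule.Quotient.mk_smul] at hq
    exact (Submodule.Quotient.mk_eq_zero _).mp hq
  refine ⟨B.det * s, ?_, ?_⟩
  · intro hmem
    rcases hJp.mem_or_mem hmem with h1 | h2
    · exact hdet h1
    · exact hs h2
  · intro x hx
    have hPx : Pr x ∈ Submodule.span R (Set.range z) := by
      rw [← hrange]
      exact ⟨x, rfl⟩
    obtain ⟨e, hesum⟩ := (Submodule.mem_span_range_iff_exists_fun R).mp hPx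
    have hfin2 : (B.det * s) • x = ∑ i, e i • (B.det • z i) := by
      rw [mul_smul, ← hPfix x hx, ← hesum, Finset.smul_sum]
      exact Finset.sum_congr rfl fun i _ => smul_comm _ _ _
    rw [hfin2]
    exact Submodule.sum_mem _ fun i _ => Submodule.smul_mem _ _ (hdetz i)

end HStep

set_option synthInstance.maxHeartbeats 1000000 in
set_option maxHeartbeats 4000000 in
/-- for a compact object `C` of `D(R)` — i.e. a bounded complex of
finitely generated projective graded modules — the small support
`ssupp C = {p : k(p) ⊗^L C ≠ 0}` (tensoring with `k(p)` computes the derived tensor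
product since the terms of `C` are projective) equals `V(Ann_R H*(C))`; in particular
it is a closed subset of `Spec^h R`. -/
theorem stmt16 {G R : Type} [AddCommGroup G] [DecidableEq G] [CommRing R]
    (𝒜 : G → AddSubgroup R) [GradedRing 𝒜]
    (hnoeth : ∀ c : ℕ →o {I : Ideal R // Ideal.IsHomogeneous 𝒜 I},
      ∃ n : ℕ, ∀ m : ℕ, n ≤ m → c m = c n)
    (C : GCplx 𝒜)
    (hbdd : ∃ a b : ℤ, ∀ i : ℤ, (i < a ∨ b < i) → Subsingleton (C.X i))
    (hfg : ∀ i : ℤ, Module.Finite R (C.X i))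
    (hproj : ∀ i : ℤ, Module.Projective R (C.X i))
    (S : {p : PrimeSpectrum R // Ideal.IsHomogeneous 𝒜 p.asIdeal} → Submonoid R)
    (hS : ∀ p, ((S p : Submonoid R) : Set R) =
      {s : R | (∃ g : G, s ∈ 𝒜 g) ∧ s ∉ p.1.asIdeal}) :
    {p : {p : PrimeSpectrum R // Ideal.IsHomogeneous 𝒜 p.asIdeal} |
        ∃ i : ℤ, ¬ Function.Exact
          (LinearMap.lTensor
            (Localization (S p) ⧸ (Ideal.map (algebraMap R (Localization (S p))) p.1.asIdeal))
            (C.d i))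
          (LinearMap.lTensor
            (Localization (S p) ⧸ (Ideal.map (algebraMap R (Localization (S p))) p.1.asIdeal))
            (C.d (i + 1)))}
      = {p | ∀ r : R,
          (∀ (i : ℤ) (x : C.X (i + 1)), C.d (i + 1) x = 0 → ∃ y : C.X i, C.d i y = r • x)
          → r ∈ p.1.asIdeal} ∧
    IsClosed {p : {p : PrimeSpectrum R // Ideal.IsHomogeneous 𝒜 p.asIdeal} |
        ∃ i : ℤ, ¬ Function.Exact
          (LinearMap.lTensor
            (Localization (S p) ⧸ (Ideal.map (algebraMap R (Localization (S p))) p.1.asIdeal))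
            (C.d i))
          (LinearMap.lTensor
            (Localization (S p) ⧸ (Ideal.map (algebraMap R (Localization (S p))) p.1.asIdeal))
            (C.d (i + 1)))} := by
  classical
  obtain ⟨a, b, hbddab⟩ := hbdd
  have hEq : {p : {p : PrimeSpectrum R // Ideal.IsHomogeneous 𝒜 p.asIdeal} |
        ∃ i : ℤ, ¬ Function.Exact
          (LinearMap.lTensor
            (Localization (S p) ⧸ (Ideal.map (algebraMap R (Localization (S p))) p.1.asIdeal))
            (C.d i))
          (LinearMap.lTensor
            (Localization (S p) ⧸ (Ideal.map (algebraMap R (Localization (S p))) p.1.asIdeal))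
            (C.d (i + 1)))}
      = {p | ∀ r : R,
          (∀ (i : ℤ) (x : C.X (i + 1)), C.d (i + 1) x = 0 → ∃ y : C.X i, C.d i y = r • x)
          → r ∈ p.1.asIdeal} := by
    ext p
    simp only [Set.mem_setOf_eq]
    constructor
    · intro hL r hrAnn
      by_contra hrp
      have hcomp : ∃ g, (DirectSum.decompose 𝒜 r g : R) ∉ p.1.asIdeal := by
        by_contra hall
        push_neg at hall
        apply hrp
        have hsum : r = ∑ g ∈ (DirectSum.decompose 𝒜 r).support,
            (DirectSum.decompose 𝒜 r g : R) := (DirectSum.sum_support_decompose 𝒜 r).symm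
        rw [hsum]
        exact Ideal.sum_mem _ fun g _ => hall g
      obtain ⟨g, hg⟩ := hcomp
      have hsgS : (DirectSum.decompose 𝒜 r g : R) ∈ S p := by
        rw [← SetLike.mem_coe, hS p]
        exact ⟨⟨g, SetLike.coe_mem _⟩, hg⟩
      obtain ⟨s', hs', h, hh⟩ := C.engine (S p) hbddab hproj
        (fun j s hsS hfam hfameq =>
          ⟨(DirectSum.decompose 𝒜 r g : R), hsgS, fun x hx => by
            obtain ⟨y, hy⟩ := annset_decompose 𝒜 C hrAnn g j x hx
            exact ⟨y, hy⟩⟩)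
      obtain ⟨i, hi⟩ := hL
      exact hi (C.key1 (S p) p.1.asIdeal hs' h hh i)
    · intro hR
      by_contra hno
      rw [not_exists] at hno
      haveI hJp : p.1.asIdeal.IsPrime := p.1.2
      have hSpJ : ∀ u : (S p), (u : R) ∉ p.1.asIdeal := by
        intro u
        have hu := u.2
        rw [← SetLike.mem_coe, hS p] at hu
        exact hu.2
      obtain ⟨s', hs', h, hh⟩ := C.engine p.1.asIdeal.primeCompl hbddab hproj
        (fun j s hsM hfam hfameq => by
          haveI := hfg (j+1)
          obtain ⟨rr, hrr, hrrZ⟩ := C.hstep (S p) p.1.asIdeal hSpJ j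
            (not_not.mp (hno j)) hsM hfam hfameq
          exact ⟨rr, hrr, hrrZ⟩)
      have hAnn : ∀ (i : ℤ) (x : C.X (i + 1)), C.d (i + 1) x = 0
          → ∃ y : C.X i, C.d i y = s' • x := by
        intro i x hx
        refine ⟨h i x, ?_⟩
        have e := LinearMap.congr_fun (hh i) x
        simp only [LinearMap.add_apply, LinearMap.coe_comp, Function.comp_apply,
          LinearMap.smul_apply, LinearMap.id_apply, hx, map_zero, add_zero] at e
        exact e
      exact hs' (hR s' hAnn)
  refine ⟨hEq, ?_⟩
  rw [hEq]
  have hpre : {p : {p : PrimeSpectrum R // Ideal.IsHomogeneous 𝒜 p.asIdeal} | ∀ r : R,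
          (∀ (i : ℤ) (x : C.X (i + 1)), C.d (i + 1) x = 0 → ∃ y : C.X i, C.d i y = r • x)
          → r ∈ p.1.asIdeal}
      = Subtype.val ⁻¹' (PrimeSpectrum.zeroLocus
          {r : R | ∀ (i : ℤ) (x : C.X (i + 1)), C.d (i + 1) x = 0
            → ∃ y : C.X i, C.d i y = r • x}) := by
    ext p
    simp only [Set.mem_setOf_eq, Set.mem_preimage, PrimeSpectrum.mem_zeroLocus,
      Set.subset_def, SetLike.mem_coe]
  rw [hpre]
  exact (PrimeSpectrum.isClosed_zeroLocus _).preimage continuous_subtype_val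
end Graded
end

section
/- Let R be a commutative G-graded noetherian ring and V ⊆ Spec^h R a Zariski-closed subset. Then there is a compact object C of D(R) with ssupp(C) = V; explicitly, writing V = V(f_1,...,f_n) with f_i homogeneous of degree g_i, one may take C to be the derived tensor product of the Koszul cones C_i = cone(f_i : R(-g_i) → R), and ssupp(C_i) = V((f_i)). -/
open TensorProduct

open scoped DirectSum TensorProduct

namespace Stmt17Aux

/-- Index type of the Koszul complex: subsets of `Fin n` of size `i`. -/
abbrev KIdx (n : ℕ) (i : ℤ) : Type := {S : Finset (Fin n) // ((S.card : ℤ) = i)}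

/-- The degree-`i` term of the Koszul complex on `n` elements over `A`. -/
abbrev KMod (n : ℕ) (A : Type) (i : ℤ) : Type := KIdx n i → A

/-- Koszul sign. -/
def sgn {n : ℕ} (j : Fin n) (T : Finset (Fin n)) : ℤ := (-1) ^ (T.filter (· < j)).card

variable {n : ℕ} {A : Type} [CommRing A]

/-- Extend an element of `KMod n A i` to all finsets by zero. -/
def kext {i : ℤ} (x : KMod n A i) (s : Finset (Fin n)) : A :=
  if h : ((s.card : ℤ) = i) then x ⟨s, h⟩ else 0

lemma kext_mk {i : ℤ} (x : KMod n A i) {s} (h : ((s.card : ℤ) = i)) :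
    kext x s = x ⟨s, h⟩ := dif_pos h

lemma kext_apply {i : ℤ} (x : KMod n A i) (T : KIdx n i) : kext x T.1 = x T := kext_mk x T.2

@[simp] lemma kext_add {i : ℤ} (x y : KMod n A i) (s) :
    kext (x + y) s = kext x s + kext y s := by
  unfold kext; split <;> simp

@[simp] lemma kext_smul {i : ℤ} (r : A) (x : KMod n A i) (s) :
    kext (r • x) s = r * kext x s := by
  unfold kext; split <;> simp

@[simp] lemma kext_zero {i : ℤ} (s) : kext (0 : KMod n A i) s = 0 := by
  unfold kext; split <;> simp

/-- The Koszul differential. -/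
def Kd (a : Fin n → A) (i : ℤ) : KMod n A i →ₗ[A] KMod n A (i + 1) where
  toFun x T := ∑ j ∈ T.1, sgn j (T.1.erase j) • (a j * kext x (T.1.erase j))
  map_add' x y := funext fun T => by
    simp [mul_add, smul_add, Finset.sum_add_distrib]
  map_smul' r x := funext fun T => by
    simp only [RingHom.id_apply, Pi.smul_apply, smul_eq_mul, Finset.mul_sum, kext_smul]
    exact Finset.sum_congr rfl fun j _ => by rw [mul_smul_comm, mul_left_comm]

lemma Kd_apply (a : Fin n → A) (i : ℤ) (x : KMod n A i) (T : KIdx n (i+1)) :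
    Kd a i x T = ∑ j ∈ T.1, sgn j (T.1.erase j) • (a j * kext x (T.1.erase j)) := rfl

variable {n : ℕ}

lemma sgn_erase_of_not_lt {j m : Fin n} (h : ¬ m < j) (S : Finset (Fin n)) :
    sgn j (S.erase m) = sgn j S := by
  unfold sgn
  have : m ∉ S.filter (· < j) := fun hm => h (Finset.mem_filter.1 hm).2
  rw [Finset.filter_erase, Finset.erase_eq_of_notMem this]

lemma sgn_erase_of_lt {j m : Fin n} (h : m < j) {S : Finset (Fin n)} (hm : m ∈ S) :
    sgn j (S.erase m) = -sgn j S := by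
  unfold sgn
  have hmem : m ∈ S.filter (· < j) := Finset.mem_filter.2 ⟨hm, h⟩
  rw [Finset.filter_erase, Finset.card_erase_of_mem hmem]
  obtain ⟨c, hc⟩ : ∃ c, (S.filter (· < j)).card = c + 1 :=
    ⟨(S.filter (· < j)).card - 1, (Nat.succ_pred_eq_of_pos
      (Finset.card_pos.2 ⟨m, hmem⟩)).symm⟩
  rw [hc]
  simp [pow_succ]

lemma sgn_insert_of_not_lt {j m : Fin n} (h : ¬ m < j) (S : Finset (Fin n)) :
    sgn j (insert m S) = sgn j S := by
  unfold sgn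
  rw [Finset.filter_insert, if_neg h]

lemma sgn_insert_of_lt {j m : Fin n} (h : m < j) {S : Finset (Fin n)} (hm : m ∉ S) :
    sgn j (insert m S) = -sgn j S := by
  unfold sgn
  have : m ∉ S.filter (· < j) := fun hm' => hm (Finset.mem_filter.1 hm').1
  rw [Finset.filter_insert, if_pos h, Finset.card_insert_of_notMem this]
  simp [pow_succ]

lemma sgn_mul_self (j : Fin n) (S : Finset (Fin n)) : sgn j S * sgn j S = 1 := by
  unfold sgn
  rw [← pow_add]
  exact Even.neg_one_pow ⟨_, rfl⟩

lemma sgn_dd_aux {j k : Fin n} {U : Finset (Fin n)} (hk : k ∈ U) (hkj : k < j) :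
    sgn j (U.erase j) * sgn k ((U.erase j).erase k)
      + sgn k (U.erase k) * sgn j ((U.erase k).erase j) = 0 := by
  rw [sgn_erase_of_not_lt (lt_irrefl j), sgn_erase_of_not_lt (lt_irrefl k),
    sgn_erase_of_not_lt (fun h => absurd (h.trans hkj) (lt_irrefl j)),
    sgn_erase_of_not_lt (lt_irrefl k), sgn_erase_of_not_lt (lt_irrefl j),
    sgn_erase_of_lt hkj hk]
  ring

lemma sgn_dd {j k : Fin n} {U : Finset (Fin n)} (hj : j ∈ U) (hk : k ∈ U) (hne : k ≠ j) :
    sgn j (U.erase j) * sgn k ((U.erase j).erase k)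
      + sgn k (U.erase k) * sgn j ((U.erase k).erase j) = 0 := by
  rcases hne.lt_or_gt with h | h
  · exact sgn_dd_aux hk h
  · rw [add_comm]; exact sgn_dd_aux hj h

lemma sgn_htpy {j0 m : Fin n} {S : Finset (Fin n)} (hm : m ∈ S) (hj : j0 ∉ S) :
    sgn m (S.erase m) * sgn j0 (S.erase m)
      + sgn j0 S * sgn m (insert j0 (S.erase m)) = 0 := by
  have hmj : m ≠ j0 := fun e => hj (e ▸ hm)
  have hj0m : j0 ∉ S.erase m := fun h => hj (Finset.mem_of_mem_erase h)
  rw [sgn_erase_of_not_lt (lt_irrefl m)]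
  rcases hmj.lt_or_gt with h | h
  · rw [sgn_erase_of_lt h hm, sgn_insert_of_not_lt (fun hh => absurd (hh.trans h) (lt_irrefl j0)),
      sgn_erase_of_not_lt (lt_irrefl m)]
    ring
  · rw [sgn_erase_of_not_lt (fun hh => absurd (hh.trans h) (lt_irrefl m)),
      sgn_insert_of_lt h hj0m, sgn_erase_of_not_lt (lt_irrefl m)]
    ring


variable {A : Type} [CommRing A]

lemma card_erase_int {i : ℤ} {U : Finset (Fin n)} (hU : (U.card : ℤ) = i + 1)
    {j : Fin n} (hj : j ∈ U) : ((U.erase j).card : ℤ) = i := by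
  rw [Finset.card_erase_of_mem hj]
  have h1 : 1 ≤ U.card := Finset.card_pos.2 ⟨j, hj⟩
  omega

theorem Kd_Kd (a : Fin n → A) (i : ℤ) (x : KMod n A i) :
    Kd a (i + 1) (Kd a i x) = 0 := by
  funext U
  show ∑ j ∈ U.1, sgn j (U.1.erase j) • (a j * kext (Kd a i x) (U.1.erase j)) = 0
  have step : ∀ j ∈ U.1,
      sgn j (U.1.erase j) • (a j * kext (Kd a i x) (U.1.erase j)) =
      ∑ k ∈ U.1.erase j, (sgn j (U.1.erase j) * sgn k ((U.1.erase j).erase k)) •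
        (a j * a k * kext x ((U.1.erase j).erase k)) := by
    intro j hj
    rw [kext_mk _ (card_erase_int U.2 hj), Kd_apply, Finset.mul_sum, Finset.smul_sum]
    refine Finset.sum_congr rfl fun k _ => ?_
    rw [mul_smul_comm, smul_smul, mul_assoc]
  rw [Finset.sum_congr rfl step, Finset.sum_sigma']
  refine Finset.sum_involution (fun p _ => ⟨p.2, p.1⟩) ?_ ?_ ?_ ?_
  · rintro ⟨j, k⟩ hp
    obtain ⟨hj, hk⟩ := Finset.mem_sigma.1 hp
    have hkU : k ∈ U.1 := Finset.mem_of_mem_erase hk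
    have hne : k ≠ j := (Finset.mem_erase.1 hk).1
    have herase : (U.1.erase j).erase k = (U.1.erase k).erase j := Finset.erase_right_comm
    have hjk : j ∈ U.1.erase k := Finset.mem_erase.2 ⟨hne.symm, hj⟩
    show _ + _ = 0
    dsimp only
    have hbody : a k * a j * kext x (((↑U : Finset (Fin n)).erase k).erase j)
        = a j * a k * kext x (((↑U : Finset (Fin n)).erase j).erase k) := by
      rw [mul_comm (a k), ← herase]
    rw [hbody, ← add_smul, sgn_dd hj hkU hne, zero_smul]
  · rintro ⟨j, k⟩ hp h
    obtain ⟨hj, hk⟩ := Finset.mem_sigma.1 hp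
    intro he
    exact (Finset.mem_erase.1 hk).1 (congrArg Sigma.fst he)
  · rintro ⟨j, k⟩ hp
    obtain ⟨hj, hk⟩ := Finset.mem_sigma.1 hp
    exact Finset.mem_sigma.2 ⟨Finset.mem_of_mem_erase hk,
      Finset.mem_erase.2 ⟨fun e => (Finset.mem_erase.1 hk).1 e.symm, hj⟩⟩
  · rintro ⟨j, k⟩ _
    rfl

/-- Contracting homotopy when `a j0` is invertible (`u * a j0 = 1`). -/
def Khtpy (j0 : Fin n) (u : A) (i : ℤ) (x : KMod n A (i + 1)) : KMod n A i :=
  fun S => if j0 ∈ S.1 then 0 else sgn j0 S.1 • (u * kext x (insert j0 S.1))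

lemma Khtpy_zero (j0 : Fin n) (u : A) (i : ℤ) : Khtpy j0 u i (0 : KMod n A (i + 1)) = 0 := by
  funext S; unfold Khtpy; split <;> simp

theorem Kd_htpy (a : Fin n → A) {j0 : Fin n} {u : A} (hu : u * a j0 = 1) (i : ℤ)
    (x : KMod n A (i + 1)) :
    Kd a i (Khtpy j0 u i x) + Khtpy j0 u (i + 1) (Kd a (i + 1) x) = x := by
  funext S
  rw [Pi.add_apply]
  by_cases hj : j0 ∈ S.1
  · have h2 : Khtpy j0 u (i + 1) (Kd a (i + 1) x) S = 0 := if_pos hj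
    rw [h2, add_zero, Kd_apply]
    rw [Finset.sum_eq_single_of_mem j0 hj (fun m hm hne => ?_)]
    · rw [kext_mk _ (card_erase_int S.2 hj)]
      have h3 : Khtpy j0 u i x ⟨S.1.erase j0, card_erase_int S.2 hj⟩
          = sgn j0 (S.1.erase j0) • (u * kext x (insert j0 (S.1.erase j0))) :=
        if_neg (Finset.notMem_erase j0 S.1)
      rw [h3, Finset.insert_erase hj, kext_apply, mul_smul_comm, smul_smul, sgn_mul_self,
        one_smul, ← mul_assoc, mul_comm (a j0) u, hu, one_mul]
    · rw [kext_mk _ (card_erase_int S.2 hm)]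
      have h4 : Khtpy j0 u i x ⟨S.1.erase m, card_erase_int S.2 hm⟩ = 0 :=
        if_pos (Finset.mem_erase.2 ⟨fun e => hne e.symm, hj⟩)
      rw [h4, mul_zero, smul_zero]
  · have hci : ((insert j0 S.1).card : ℤ) = i + 1 + 1 := by
      rw [Finset.card_insert_of_notMem hj]; have := S.2; push_cast; omega
    have h2 : Khtpy j0 u (i + 1) (Kd a (i + 1) x) S
        = sgn j0 S.1 • (u * kext (Kd a (i + 1) x) (insert j0 S.1)) := if_neg hj
    have h5 : ((⟨insert j0 S.1, hci⟩ : KIdx n (i + 1 + 1)) : Finset (Fin n)) = insert j0 S.1 := rfl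
    rw [h2, kext_mk _ hci, Kd_apply a (i + 1) x ⟨insert j0 S.1, hci⟩, h5, Finset.sum_insert hj, Finset.erase_insert hj, kext_apply, mul_add, smul_add]
    have hB1 : sgn j0 S.1 • (u * (sgn j0 (S.1) • (a j0 * x S))) = x S := by
      rw [mul_smul_comm, smul_smul, sgn_mul_self, one_smul, ← mul_assoc, hu, one_mul]
    rw [hB1, add_left_comm]
    have hAB2 : Kd a i (Khtpy j0 u i x) S
        + sgn j0 S.1 • (u * ∑ m ∈ S.1, sgn m ((insert j0 S.1).erase m) •
            (a m * kext x ((insert j0 S.1).erase m))) = 0 := by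
      rw [Kd_apply, Finset.mul_sum, Finset.smul_sum, ← Finset.sum_add_distrib]
      refine Finset.sum_eq_zero fun m hm => ?_
      have hmj : m ≠ j0 := fun e => hj (e ▸ hm)
      have hins : (insert j0 S.1).erase m = insert j0 (S.1.erase m) :=
        Finset.erase_insert_of_ne hmj.symm
      have h6 : Khtpy j0 u i x ⟨S.1.erase m, card_erase_int S.2 hm⟩
          = sgn j0 (S.1.erase m) • (u * kext x (insert j0 (S.1.erase m))) :=
        if_neg (fun h => hj (Finset.mem_of_mem_erase h))
      rw [kext_mk _ (card_erase_int S.2 hm), h6, hins]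
      rw [mul_smul_comm, smul_smul, mul_smul_comm, smul_smul, mul_left_comm (a m) u,
        ← add_smul, sgn_htpy hm hj, zero_smul]
    rw [hAB2, add_zero]

theorem Kd_eq_zero_of_zero (a : Fin n → A) (ha : ∀ j, a j = 0) (i : ℤ) (x : KMod n A i) :
    Kd a i x = 0 := by
  funext T
  rw [Kd_apply]
  exact Finset.sum_eq_zero fun j _ => by rw [ha j, zero_mul, smul_zero]

theorem Kd_exact_of_unit (a : Fin n → A) (hj : ∃ j, IsUnit (a j)) (i : ℤ) :
    Function.Exact (Kd a i) (Kd a (i + 1)) := by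
  obtain ⟨j0, hu⟩ := hj
  intro y
  constructor
  · intro hy
    refine ⟨Khtpy j0 (↑hu.unit⁻¹) i y, ?_⟩
    have h := Kd_htpy a (hu.val_inv_mul) i y
    rw [hy, Khtpy_zero, add_zero] at h
    exact h
  · rintro ⟨x, rfl⟩
    rw [Kd_Kd]

theorem Kd_not_exact_of_zero (a : Fin n → A) (ha : ∀ j, a j = 0) [Nontrivial A] :
    ¬ Function.Exact (Kd a (-1)) (Kd a (-1 + 1)) := by
  intro h
  obtain ⟨z, hz⟩ := (h (fun _ => 1)).1 (by rw [Kd_eq_zero_of_zero a ha])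
  have h0 : ((∅ : Finset (Fin n)).card : ℤ) = -1 + 1 := by simp
  have := congrFun hz ⟨∅, h0⟩
  rw [Kd_apply] at this
  simp only [Finset.sum_empty] at this
  exact zero_ne_one this

section Graded

variable {G R : Type} [AddCommGroup G] [DecidableEq G] [CommRing R]
  (𝒜 : G → AddSubgroup R) [GradedRing 𝒜]
  {ι : Type} [Fintype ι] [DecidableEq ι] (t : ι → G)

/-- Componentwise grading on `ι → R`, with degree shift `t S` on the `S` component. -/
def pigr (gg : G) : AddSubgroup (ι → R) := AddSubgroup.pi Set.univ fun S => 𝒜 (t S + gg)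

lemma mem_pigr {gg : G} {x : ι → R} : x ∈ pigr 𝒜 t gg ↔ ∀ S, x S ∈ 𝒜 (t S + gg) := by
  constructor
  · exact fun h S => h S (Set.mem_univ S)
  · exact fun h S _ => h S

lemma of_congr {M : Type} [AddCommGroup M] (B : G → AddSubgroup M) {g h : G} (e : g = h)
    (x : M) (hx : x ∈ B g) :
    DirectSum.of (fun i => B i) g ⟨x, hx⟩ = DirectSum.of (fun i => B i) h ⟨x, e ▸ hx⟩ := by
  subst e; rfl

lemma pigrSingle_mem (S : ι) (h : G) (r : R) (hr : r ∈ 𝒜 h) :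
    Pi.single S r ∈ pigr 𝒜 t (h - t S) := by
  rw [mem_pigr]
  intro S'
  rcases eq_or_ne S' S with rfl | hne
  · rw [Pi.single_eq_same, show t S' + (h - t S') = h by abel]
    exact hr
  · rw [Pi.single_eq_of_ne hne]
    exact (𝒜 _).zero_mem

/-- The inclusion of `𝒜 h` into degree `h - t S` of `⨁ gg, pigr 𝒜 t gg`. -/
def pigrSingle (S : ι) (h : G) : (𝒜 h) →+ ⨁ gg, pigr 𝒜 t gg :=
  (DirectSum.of (fun gg => pigr 𝒜 t gg) (h - t S)).comp
    { toFun := fun r => ⟨Pi.single S (r : R), pigrSingle_mem 𝒜 t S h r r.2⟩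
      map_zero' := Subtype.ext (by simp)
      map_add' := fun r s => Subtype.ext (by simp [Pi.single_add]) }

/-- The decomposition map for the componentwise grading. -/
noncomputable def pigrDecompose : (ι → R) →+ ⨁ gg, pigr 𝒜 t gg :=
  ∑ S : ι, (DirectSum.toAddMonoid (fun h => pigrSingle 𝒜 t S h)).comp
    ((DirectSum.decomposeAddEquiv 𝒜).toAddMonoidHom.comp
      (Pi.evalAddMonoidHom (fun _ : ι => R) S))

lemma pigr_coe_single (S : ι) (r : R) :
    DirectSum.coeAddMonoidHom (pigr 𝒜 t)
      (DirectSum.toAddMonoid (fun h => pigrSingle 𝒜 t S h)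
        ((DirectSum.decomposeAddEquiv 𝒜) r)) = Pi.single S r := by
  induction r using DirectSum.Decomposition.inductionOn 𝒜 with
  | zero => simp
  | @homogeneous g' r' =>
    rw [DirectSum.decomposeAddEquiv_apply, DirectSum.decompose_coe, DirectSum.toAddMonoid_of]
    exact DirectSum.coeAddMonoidHom_of _ _ _
  | add a b ha hb => rw [map_add, map_add, map_add, ha, hb, Pi.single_add]

lemma pigrDecompose_leftInv (x : ι → R) :
    DirectSum.coeAddMonoidHom (pigr 𝒜 t) (pigrDecompose 𝒜 t x) = x := by
  rw [pigrDecompose, AddMonoidHom.finset_sum_apply, map_sum]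
  simp only [AddMonoidHom.comp_apply, Pi.evalAddMonoidHom_apply,
    AddEquiv.toAddMonoidHom_eq_coe, AddMonoidHom.coe_coe, pigr_coe_single]
  exact Finset.univ_sum_single x

lemma pigrDecompose_rightInv (gg : G) (m : pigr 𝒜 t gg) :
    pigrDecompose 𝒜 t ((m : ι → R)) = DirectSum.of (fun g => pigr 𝒜 t g) gg m := by
  rw [pigrDecompose, AddMonoidHom.finset_sum_apply]
  have hterm : ∀ S : ι,
      ((DirectSum.toAddMonoid (fun h => pigrSingle 𝒜 t S h)).comp
        ((DirectSum.decomposeAddEquiv 𝒜).toAddMonoidHom.comp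
          (Pi.evalAddMonoidHom (fun _ : ι => R) S))) (m : ι → R)
      = DirectSum.of (fun g => pigr 𝒜 t g) gg
          ⟨Pi.single S ((m : ι → R) S), by
            rw [mem_pigr]
            intro S'
            rcases eq_or_ne S' S with rfl | hne
            · rw [Pi.single_eq_same]; exact ((mem_pigr 𝒜 t).1 m.2) S'
            · rw [Pi.single_eq_of_ne hne]; exact (𝒜 _).zero_mem⟩ := by
    intro S
    have hmS : (m : ι → R) S ∈ 𝒜 (t S + gg) := ((mem_pigr 𝒜 t).1 m.2) S
    show DirectSum.toAddMonoid (fun h => pigrSingle 𝒜 t S h)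
        ((DirectSum.decomposeAddEquiv 𝒜) ((m : ι → R) S)) = _
    rw [DirectSum.decomposeAddEquiv_apply, DirectSum.decompose_of_mem 𝒜 hmS,
      DirectSum.toAddMonoid_of]
    show DirectSum.of (fun g => pigr 𝒜 t g) (t S + gg - t S)
      ⟨Pi.single S ((m : ι → R) S), _⟩ = _
    rw [of_congr (pigr 𝒜 t) (show t S + gg - t S = gg by abel)]
  rw [Finset.sum_congr rfl fun S (_ : S ∈ Finset.univ) => hterm S, ← map_sum]
  congr 1
  refine Subtype.ext ?_
  rw [AddSubmonoidClass.coe_finset_sum]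
  exact Finset.univ_sum_single (m : ι → R)

/-- The componentwise grading on `ι → R` is a direct sum decomposition. -/
noncomputable instance pigrDecomposition : DirectSum.Decomposition (pigr 𝒜 t) where
  decompose' := pigrDecompose 𝒜 t
  left_inv x := pigrDecompose_leftInv 𝒜 t x
  right_inv y := by
    induction y using DirectSum.induction_on with
    | zero => simp
    | of gg m => rw [DirectSum.coeAddMonoidHom_of]; exact pigrDecompose_rightInv 𝒜 t gg m
    | add a b ha hb => rw [map_add, map_add, ha, hb]

end Graded

section Transfer

lemma exact_of_square {M N P M' N' P' : Type} [Zero P] [Zero P']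
    {f : M → N} {g : N → P} {f' : M' → N'} {g' : N' → P'}
    (e1 : M ≃ M') (e2 : N ≃ N') (e3 : P ≃ P')
    (hsq1 : ∀ x, e2 (f x) = f' (e1 x)) (hsq2 : ∀ y, e3 (g y) = g' (e2 y))
    (h30 : e3 0 = 0) (hex : Function.Exact f g) : Function.Exact f' g' := by
  intro y'
  constructor
  · intro h0
    have hg : g (e2.symm y') = 0 := by
      apply e3.injective
      rw [hsq2, e2.apply_symm_apply, h0, h30]
    obtain ⟨x, hx⟩ := (hex _).1 hg
    exact ⟨e1 x, by rw [← hsq1, hx, e2.apply_symm_apply]⟩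
  · rintro ⟨x', rfl⟩
    obtain ⟨x, rfl⟩ : ∃ x, e1 x = x' := ⟨e1.symm x', e1.apply_symm_apply x'⟩
    rw [← hsq1, ← hsq2, (hex (f x)).2 (Set.mem_range_self x), h30]

lemma exact_iff_of_square {M N P M' N' P' : Type} [Zero P] [Zero P']
    {f : M → N} {g : N → P} {f' : M' → N'} {g' : N' → P'}
    (e1 : M ≃ M') (e2 : N ≃ N') (e3 : P ≃ P')
    (hsq1 : ∀ x, e2 (f x) = f' (e1 x)) (hsq2 : ∀ y, e3 (g y) = g' (e2 y))
    (h30 : e3 0 = 0) :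
    Function.Exact f g ↔ Function.Exact f' g' := by
  have h30' : e3.symm 0 = 0 := by rw [← h30, e3.symm_apply_apply]
  constructor
  · exact exact_of_square e1 e2 e3 hsq1 hsq2 h30
  · refine exact_of_square e1.symm e2.symm e3.symm ?_ ?_ h30'
    · intro x'
      apply e2.injective
      rw [e2.apply_symm_apply, hsq1, e1.apply_symm_apply]
    · intro y'
      apply e3.injective
      rw [e3.apply_symm_apply, hsq2, e2.apply_symm_apply]

end Transfer

section TensorK

variable {R : Type} [CommRing R] {B : Type} [CommRing B] [Module R B]
variable {n : ℕ}

lemma kext_fun_smul {i : ℤ} (x : KMod n R i) (l : B) (s : Finset (Fin n)) :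
    kext (fun S => x S • l : KMod n B i) s = kext x s • l := by
  unfold kext; split
  · rfl
  · rw [zero_smul]

/-- The canonical isomorphism `B ⊗ (KMod n R i) ≃ KMod n B i`. -/
noncomputable def kiso (i : ℤ) : B ⊗[R] (KMod n R i) ≃ₗ[R] KMod n B i :=
  TensorProduct.piScalarRight R R B (KIdx n i)

lemma kiso_square (φ : R →+* B) (hsmul : ∀ (r : R) (z : B), r • z = φ r * z)
    (f : Fin n → R) (i : ℤ) (z : B ⊗[R] (KMod n R i)) :
    kiso (i + 1) (LinearMap.lTensor B (Kd f i) z)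
      = Kd (fun j => φ (f j)) i (kiso i z) := by
  induction z with
  | zero => rw [map_zero, (kiso (i+1)).map_zero, (kiso i).map_zero, map_zero]
  | add z w hz hw => rw [map_add, (kiso (i+1)).map_add, hz, hw, (kiso i).map_add, map_add]
  | tmul l x =>
    rw [LinearMap.lTensor_tmul]
    show TensorProduct.piScalarRight R R B (KIdx n (i+1)) (l ⊗ₜ (Kd f i x))
      = Kd (fun j => φ (f j)) i
          (TensorProduct.piScalarRight R R B (KIdx n i) (l ⊗ₜ x))
    rw [TensorProduct.piScalarRight_apply, TensorProduct.piScalarRight_apply,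
      TensorProduct.piScalarRightHom_tmul, TensorProduct.piScalarRightHom_tmul]
    funext T
    rw [Kd_apply]
    show (∑ j ∈ T.1, sgn j (T.1.erase j) • (f j * kext x (T.1.erase j))) • l = _
    rw [Kd_apply, Finset.sum_smul]
    refine Finset.sum_congr rfl fun j _ => ?_
    rw [kext_fun_smul, smul_assoc, mul_smul, hsmul (f j)]

lemma lTensor_Kd_exact_iff (φ : R →+* B) (hsmul : ∀ (r : R) (z : B), r • z = φ r * z)
    (f : Fin n → R) (i : ℤ) :
    Function.Exact (LinearMap.lTensor B (Kd f i)) (LinearMap.lTensor B (Kd f (i + 1)))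
      ↔ Function.Exact (Kd (fun j => φ (f j)) i)
          (Kd (fun j => φ (f j)) (i + 1)) :=
  exact_iff_of_square (kiso i).toEquiv (kiso (i + 1)).toEquiv (kiso (i + 1 + 1)).toEquiv
    (kiso_square φ hsmul f i) (kiso_square φ hsmul f (i + 1)) ((kiso (R := R) (B := B) (n := n) (i + 1 + 1)).map_zero)

end TensorK

section Gens

variable {G R : Type} [AddCommGroup G] [DecidableEq G] [CommRing R]
  (𝒜 : G → AddSubgroup R) [GradedRing 𝒜]

open scoped Classical in
/-- Greedy list of homogeneous generators for an ideal. -/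
noncomputable def genList (P : Set R) : ℕ → List R
  | 0 => []
  | (k+1) =>
    let l := genList P k
    if h : ∃ x ∈ P, x ∉ Ideal.span {y | y ∈ l} then h.choose :: l else l

lemma genList_subset (P : Set R) : ∀ k, ∀ y ∈ genList P k, y ∈ P := by
  intro k
  induction k with
  | zero => intro y hy; simp [genList] at hy
  | succ k ih =>
    intro y hy
    rw [genList] at hy
    split at hy
    · rcases List.mem_cons.1 hy with rfl | hy'
      · exact (by assumption : ∃ x ∈ P, x ∉ _).choose_spec.1
      · exact ih y hy'
    · exact ih y hy

lemma genList_span_mono (P : Set R) (k : ℕ) :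
    Ideal.span {y | y ∈ genList P k} ≤ Ideal.span {y | y ∈ genList P (k+1)} := by
  apply Ideal.span_mono
  intro y hy
  show y ∈ genList P (k+1)
  rw [genList]
  split
  · exact List.mem_cons_of_mem _ hy
  · exact hy

theorem exists_homogeneous_gens
    (hnoeth : ∀ c : ℕ →o {I : Ideal R // Ideal.IsHomogeneous 𝒜 I},
      ∃ n : ℕ, ∀ m : ℕ, n ≤ m → c m = c n)
    (I : Ideal R) (hI : Ideal.IsHomogeneous 𝒜 I) :
    ∃ (k : ℕ) (f : Fin k → R) (g : Fin k → G),
      (∀ j, f j ∈ 𝒜 (g j)) ∧ Ideal.span (Set.range f) = I := by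
  classical
  set P : Set R := {r | r ∈ I ∧ ∃ gd, r ∈ 𝒜 gd} with hP
  have hhom : ∀ k, Ideal.IsHomogeneous 𝒜 (Ideal.span {y | y ∈ genList P k}) := fun k =>
    Ideal.homogeneous_span 𝒜 _ (fun x hx => ((genList_subset P k) x hx).2)
  have hmono : Monotone (fun k => Ideal.span {y | y ∈ genList P k}) :=
    monotone_nat_of_le_succ (genList_span_mono P)
  obtain ⟨N, hN⟩ := hnoeth
    ⟨fun k => ⟨Ideal.span {y | y ∈ genList P k}, hhom k⟩, fun a b hab => hmono hab⟩
  have hstab : Ideal.span {y | y ∈ genList P (N+1)} = Ideal.span {y | y ∈ genList P N} := by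
    have := hN (N+1) (Nat.le_succ N)
    exact congrArg Subtype.val this
  have hnot : ¬ ∃ x ∈ P, x ∉ Ideal.span {y | y ∈ genList P N} := by
    intro h
    have hgl : genList P (N+1) = h.choose :: genList P N := by
      rw [genList]; exact dif_pos h
    have hx : h.choose ∈ Ideal.span {y | y ∈ genList P (N+1)} :=
      Ideal.subset_span (by rw [hgl]; exact List.mem_cons_self)
    rw [hstab] at hx
    exact h.choose_spec.2 hx
  push_neg at hnot
  have hle : Ideal.span {y | y ∈ genList P N} ≤ I :=
    Ideal.span_le.2 (fun y hy => ((genList_subset P N) y hy).1)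
  have hge : I ≤ Ideal.span {y | y ∈ genList P N} := by
    intro r hr
    rw [← DirectSum.sum_support_decompose 𝒜 r]
    apply Ideal.sum_mem
    intro g _
    exact hnot _ ⟨hI g hr, ⟨g, SetLike.coe_mem _⟩⟩
  have hrange : Set.range (genList P N).get = {y | y ∈ genList P N} := by
    ext y
    constructor
    · rintro ⟨j, rfl⟩; exact List.get_mem _ j
    · intro hy
      obtain ⟨j, hj⟩ := List.mem_iff_get.1 hy
      exact ⟨j, hj⟩
  refine ⟨(genList P N).length, (genList P N).get, ?_, ?_, ?_⟩
  · exact fun j => (((genList_subset P N) _ (List.get_mem _ j)).2).choose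
  · exact fun j => (((genList_subset P N) _ (List.get_mem _ j)).2).choose_spec
  · rw [hrange]
    exact le_antisymm hle hge

end Gens

end Stmt17Aux

/-- for a commutative `G`-graded noetherian ring `R` and a Zariski-closed
subset `V = V(I) ⊆ Spec^h R` (`I` a homogeneous ideal), there is a compact object `C` of
`D(R)` — realized as a bounded complex of finite graded free modules, e.g. the tensor
product of the Koszul cones `cone(fᵢ : R(-gᵢ) → R)` for homogeneous generators `fᵢ` of
`I` — whose small support `{p : k(p) ⊗^L C ≠ 0}` is exactly `V = {p : I ⊆ p}`. -/
theorem stmt17 {G R : Type} [AddCommGroup G] [DecidableEq G] [CommRing R]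
    (𝒜 : G → AddSubgroup R) [GradedRing 𝒜]
    (hnoeth : ∀ c : ℕ →o {I : Ideal R // Ideal.IsHomogeneous 𝒜 I},
      ∃ n : ℕ, ∀ m : ℕ, n ≤ m → c m = c n)
    (I : Ideal R) (hI : Ideal.IsHomogeneous 𝒜 I)
    (S : {p : PrimeSpectrum R // Ideal.IsHomogeneous 𝒜 p.asIdeal} → Submonoid R)
    (hS : ∀ p, ((S p : Submonoid R) : Set R) =
      {s : R | (∃ g : G, s ∈ 𝒜 g) ∧ s ∉ p.1.asIdeal}) :
    ∃ C : GCplx 𝒜,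
      (∃ a b : ℤ, ∀ i : ℤ, (i < a ∨ b < i) → Subsingleton (C.X i)) ∧
      (∀ i : ℤ, ∃ (n : ℕ) (dg : Fin n → G) (e : C.X i ≃ₗ[R] (Fin n → R)),
        ∀ (g : G) (x : C.X i), x ∈ C.gr i g ↔ ∀ j : Fin n, e x j ∈ 𝒜 (dg j + g)) ∧
      ∀ p : {p : PrimeSpectrum R // Ideal.IsHomogeneous 𝒜 p.asIdeal},
        (∃ i : ℤ, ¬ Function.Exact
          (LinearMap.lTensor
            (Localization (S p) ⧸ (Ideal.map (algebraMap R (Localization (S p))) p.1.asIdeal))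
            (C.d i))
          (LinearMap.lTensor
            (Localization (S p) ⧸ (Ideal.map (algebraMap R (Localization (S p))) p.1.asIdeal))
            (C.d (i + 1))))
        ↔ I ≤ p.1.asIdeal := by
  classical
  obtain ⟨k, f, gd, hfdeg, hfspan⟩ := Stmt17Aux.exists_homogeneous_gens 𝒜 hnoeth I hI
  refine ⟨{ X := fun i => Stmt17Aux.KMod k R i
            gr := fun i => Stmt17Aux.pigr 𝒜 (fun S : Stmt17Aux.KIdx k i => ∑ j ∈ S.1, gd j)
            smul_mem := ?_
            d := fun i => Stmt17Aux.Kd f i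
            dd := fun i m => Stmt17Aux.Kd_Kd f i m
            d_gr := ?_ }, ?_, ?_, ?_⟩
  · -- smul_mem
    intro i g h r m hr hm
    rw [Stmt17Aux.mem_pigr] at hm ⊢
    intro T
    have := SetLike.mul_mem_graded hr (hm T)
    have heq : g + ((∑ j ∈ T.1, gd j) + h) = (∑ j ∈ T.1, gd j) + (g + h) := by abel
    exact heq ▸ this
  · -- d_gr
    intro i g m hm
    rw [Stmt17Aux.mem_pigr] at hm ⊢
    intro T
    rw [Stmt17Aux.Kd_apply]
    apply AddSubgroup.sum_mem
    intro j hj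
    apply AddSubgroup.zsmul_mem
    rw [Stmt17Aux.kext_mk _ (Stmt17Aux.card_erase_int T.2 hj)]
    have hmem := SetLike.mul_mem_graded (hfdeg j)
      (hm ⟨T.1.erase j, Stmt17Aux.card_erase_int T.2 hj⟩)
    have hsum : gd j + ∑ j' ∈ T.1.erase j, gd j' = ∑ j' ∈ T.1, gd j' :=
      Finset.add_sum_erase _ gd hj
    have heq : gd j + ((∑ j' ∈ T.1.erase j, gd j') + g) = (∑ j' ∈ T.1, gd j') + g := by
      rw [← hsum]; abel
    exact heq ▸ hmem
  · -- boundedness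
    refine ⟨0, (k : ℤ), fun i hi => ⟨fun x y => funext fun T => ?_⟩⟩
    exfalso
    have h2 := T.2
    have h1 : T.1.card ≤ k := by
      have := Finset.card_le_card (Finset.subset_univ T.1)
      rwa [Finset.card_fin] at this
    rcases hi with hi | hi <;> omega
  · -- graded freeness
    intro i
    set e0 : Fin (Fintype.card (Stmt17Aux.KIdx k i)) ≃ Stmt17Aux.KIdx k i :=
      (Fintype.equivFin (Stmt17Aux.KIdx k i)).symm with he0
    refine ⟨Fintype.card (Stmt17Aux.KIdx k i), fun j => ∑ j' ∈ (e0 j).1, gd j',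
      LinearEquiv.funCongrLeft R R e0, fun g x => ?_⟩
    rw [Stmt17Aux.mem_pigr]
    simp only [LinearEquiv.funCongrLeft_apply, LinearMap.funLeft_apply]
    constructor
    · intro h j
      exact h (e0 j)
    · intro h T
      have := h (e0.symm T)
      rwa [e0.apply_symm_apply] at this
  · -- support
    intro p
    have hdisj : Disjoint ((S p : Submonoid R) : Set R) ((p.1.asIdeal : Ideal R) : Set R) := by
      rw [hS, Set.disjoint_left]
      rintro x ⟨hx1, hx2⟩ hxp
      exact hx2 hxp
    set J : Ideal (Localization (S p)) :=
      Ideal.map (algebraMap R (Localization (S p))) p.1.asIdeal with hJ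
    have hJprime : J.IsPrime :=
      IsLocalization.isPrime_of_isPrime_disjoint (S p) _ p.1.asIdeal p.1.isPrime hdisj
    haveI : Nontrivial (Localization (S p) ⧸ J) :=
      Ideal.Quotient.nontrivial_iff.mpr hJprime.ne_top
    set L := Localization (S p) ⧸ J with hL
    set φ : R →+* L :=
      (Ideal.Quotient.mk J).comp (algebraMap R (Localization (S p))) with hφ
    have hsmul : ∀ (r : R) (z : L), r • z = φ r * z := by
      intro r z
      obtain ⟨l, rfl⟩ := Ideal.Quotient.mk_surjective z
      have h1 : r • (Ideal.Quotient.mk J l) = Ideal.Quotient.mk J (r • l) := rfl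
      rw [h1, Algebra.smul_def r l, map_mul]
      rfl
    have hiff := fun i : ℤ => Stmt17Aux.lTensor_Kd_exact_iff (B := L) φ hsmul f i
    constructor
    · rintro ⟨i, hi⟩
      by_contra hIp
      have hex : ∃ j, f j ∉ p.1.asIdeal := by
        by_contra hall
        push_neg at hall
        refine hIp ?_
        rw [← hfspan]
        exact Ideal.span_le.2 (by rintro y ⟨j, rfl⟩; exact hall j)
      obtain ⟨j, hj⟩ := hex
      have hmem : f j ∈ (S p : Submonoid R) := by
        show f j ∈ ((S p : Submonoid R) : Set R)
        rw [hS]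
        exact ⟨⟨gd j, hfdeg j⟩, hj⟩
      have hunit : IsUnit (φ (f j)) :=
        (IsLocalization.map_units (Localization (S p)) (⟨f j, hmem⟩ : S p)).map
          (Ideal.Quotient.mk J)
      exact hi ((hiff i).2 (Stmt17Aux.Kd_exact_of_unit _ ⟨j, hunit⟩ i))
    · intro hIp
      refine ⟨-1, fun hex => ?_⟩
      have hzero : ∀ j, φ (f j) = 0 := fun j => by
        apply Ideal.Quotient.eq_zero_iff_mem.2
        exact Ideal.mem_map_of_mem _ (hIp (by rw [← hfspan]; exact Ideal.subset_span ⟨j, rfl⟩))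
      exact Stmt17Aux.Kd_not_exact_of_zero (fun j => φ (f j)) hzero ((hiff (-1)).1 hex)
end

section
/- Let R be a commutative G-graded noetherian ring and p ≠ q two distinct homogeneous prime ideals. Then k(p) ⊗^L_R k(q) = 0 in the derived category of graded R-modules. -/
open CategoryTheory

noncomputable section

namespace Stmt19Proof

open CategoryTheory.Limits MonoidalCategory DirectSum

variable {R : Type} [CommRing R]

lemma homologyMap_smul' {ι : Type} {c : ComplexShape ι}
    {K L : HomologicalComplex (ModuleCat.{0} R) c} (φ : K ⟶ L) (s : R) (i : ι) :
    HomologicalComplex.homologyMap (s • φ) i = s • HomologicalComplex.homologyMap φ i := by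
  dsimp only [HomologicalComplex.homologyMap]
  rw [show (HomologicalComplex.shortComplexFunctor (ModuleCat.{0} R) c i).map (s • φ)
      = s • (HomologicalComplex.shortComplexFunctor (ModuleCat.{0} R) c i).map φ from
      ShortComplex.hom_ext _ _ rfl rfl rfl, ShortComplex.homologyMap_smul]
  rfl

lemma leftDerived_map_smul_one (M N : ModuleCat.{0} R) (s : R) (i : ℕ) :
    (((tensoringLeft (ModuleCat.{0} R)).obj M).leftDerived i).map (s • 𝟙 N)
      = s • 𝟙 ((((tensoringLeft (ModuleCat.{0} R)).obj M).leftDerived i).obj N) := by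
  set F := (tensoringLeft (ModuleCat.{0} R)).obj M with hF
  have P : ProjectiveResolution N := ProjectiveResolution.of N
  have comm : (s • 𝟙 P.complex).f 0 ≫ P.π.f 0 = P.π.f 0 ≫ (s • 𝟙 N) := by
    ext x
    exact (P.π.f 0).hom.map_smul s x
  have h := ProjectiveResolution.isoLeftDerivedObj_hom_naturality (s • 𝟙 N) P P
    (s • 𝟙 P.complex) comm F i
  have h2 : (F.mapHomologicalComplex (ComplexShape.down ℕ) ⋙
      HomologicalComplex.homologyFunctor _ _ i).map (s • 𝟙 P.complex)
      = s • 𝟙 ((F.mapHomologicalComplex (ComplexShape.down ℕ) ⋙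
          HomologicalComplex.homologyFunctor _ _ i).obj P.complex) := by
    dsimp only [Functor.comp_map]
    rw [Functor.map_smul, CategoryTheory.Functor.map_id]
    show HomologicalComplex.homologyMap (s • 𝟙 _) i = _
    rw [homologyMap_smul', HomologicalComplex.homologyMap_id]
    rfl
  rw [h2] at h
  calc (F.leftDerived i).map (s • 𝟙 N)
      = ((F.leftDerived i).map (s • 𝟙 N) ≫ (P.isoLeftDerivedObj F i).hom)
          ≫ (P.isoLeftDerivedObj F i).inv := by simp
    _ = _ := by rw [h]; simp [Linear.smul_comp, Linear.comp_smul]; rfl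

lemma smul_one_conj (M N : ModuleCat.{0} R) (s : R) (i : ℕ) (P : ProjectiveResolution N) :
    s • 𝟙 ((((tensoringLeft (ModuleCat.{0} R)).obj M).leftDerived i).obj N)
      = (P.isoLeftDerivedObj ((tensoringLeft (ModuleCat.{0} R)).obj M) i).hom ≫
        HomologicalComplex.homologyMap
          (s • 𝟙 ((((tensoringLeft (ModuleCat.{0} R)).obj M).mapHomologicalComplex
            (ComplexShape.down ℕ)).obj P.complex)) i ≫
        (P.isoLeftDerivedObj ((tensoringLeft (ModuleCat.{0} R)).obj M) i).inv := by
  rw [homologyMap_smul', HomologicalComplex.homologyMap_id]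
  ext x
  show s • x = (P.isoLeftDerivedObj ((tensoringLeft (ModuleCat.{0} R)).obj M) i).inv.hom
    (s • (P.isoLeftDerivedObj ((tensoringLeft (ModuleCat.{0} R)).obj M) i).hom.hom x)
  rw [map_smul]
  simp

lemma smul_one_obj (M X : ModuleCat.{0} R) (s : R) :
    s • 𝟙 (((tensoringLeft (ModuleCat.{0} R)).obj M).obj X) = (s • 𝟙 M) ▷ X := by
  rw [MonoidalLinear.smul_whiskerRight, MonoidalCategory.id_whiskerRight]
  rfl

lemma complex_smul_zero (M N : ModuleCat.{0} R) (s : R) (hs : s • 𝟙 M = 0)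
    (P : ProjectiveResolution N) :
    s • 𝟙 ((((tensoringLeft (ModuleCat.{0} R)).obj M).mapHomologicalComplex
      (ComplexShape.down ℕ)).obj P.complex) = 0 := by
  ext j : 1
  rw [HomologicalComplex.smul_f_apply, HomologicalComplex.id_f, HomologicalComplex.zero_f_apply]
  show s • 𝟙 (((tensoringLeft (ModuleCat.{0} R)).obj M).obj (P.complex.X j)) = 0
  rw [smul_one_obj, hs, MonoidalPreadditive.zero_whiskerRight]

lemma complex_smul_isIso (M N : ModuleCat.{0} R) (s : R) (hs : IsIso (s • 𝟙 M))
    (P : ProjectiveResolution N) :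
    IsIso (s • 𝟙 ((((tensoringLeft (ModuleCat.{0} R)).obj M).mapHomologicalComplex
      (ComplexShape.down ℕ)).obj P.complex)) := by
  have : ∀ j : ℕ, IsIso ((s • 𝟙 ((((tensoringLeft (ModuleCat.{0} R)).obj M).mapHomologicalComplex
      (ComplexShape.down ℕ)).obj P.complex)).f j) := by
    intro j
    rw [HomologicalComplex.smul_f_apply, HomologicalComplex.id_f]
    show IsIso (s • 𝟙 (((tensoringLeft (ModuleCat.{0} R)).obj M).obj (P.complex.X j)))
    rw [smul_one_obj]
    infer_instance
  exact HomologicalComplex.Hom.isIso_of_components _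

lemma isZero_main (M N : ModuleCat.{0} R) (s : R) (i : ℕ)
    (h : (s • 𝟙 M = 0 ∧ IsIso (s • 𝟙 N)) ∨ (IsIso (s • 𝟙 M) ∧ s • 𝟙 N = 0)) :
    IsZero ((((tensoringLeft (ModuleCat.{0} R)).obj M).leftDerived i).obj N) := by
  set F := (tensoringLeft (ModuleCat.{0} R)).obj M with hF
  set T := (F.leftDerived i).obj N with hT
  have P : ProjectiveResolution N := ProjectiveResolution.of N
  have hz : s • 𝟙 T = 0 := by
    rcases h with ⟨hM, _⟩ | ⟨_, hN⟩
    · rw [smul_one_conj M N s i P, complex_smul_zero M N s hM P,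
        HomologicalComplex.homologyMap_zero]
      simp
      exact zero_comp
    · rw [← leftDerived_map_smul_one, hN]
      have : (0 : N ⟶ N) = (0 : R) • 𝟙 N := by simp
      rw [this, leftDerived_map_smul_one, zero_smul]
  have hiso : IsIso (s • 𝟙 T) := by
    rcases h with ⟨_, hN⟩ | ⟨hM, _⟩
    · rw [← leftDerived_map_smul_one]
      infer_instance
    · rw [smul_one_conj M N s i P]
      have := complex_smul_isIso M N s hM P
      have : IsIso (HomologicalComplex.homologyMap
          (s • 𝟙 ((((tensoringLeft (ModuleCat.{0} R)).obj M).mapHomologicalComplex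
            (ComplexShape.down ℕ)).obj P.complex)) i) := by
        infer_instance
      exact @IsIso.comp_isIso _ _ _ _ _ _ _ inferInstance
        (@IsIso.comp_isIso _ _ _ _ _ _ _ this (Iso.isIso_inv _))
  rw [IsZero.iff_id_eq_zero]
  calc 𝟙 T = (s • 𝟙 T) ≫ inv (s • 𝟙 T) := (IsIso.hom_inv_id _).symm
    _ = 0 ≫ inv (s • 𝟙 T) := congrArg (· ≫ inv (s • 𝟙 T)) hz
    _ = 0 := zero_comp

lemma kill_aux (S : Submonoid R) (I : Ideal R) (s : R) (hs : s ∈ I)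
    (x : Localization S ⧸ (Ideal.map (algebraMap R (Localization S)) I)) :
    s • x = 0 := by
  obtain ⟨y, rfl⟩ := Ideal.Quotient.mk_surjective x
  rw [← algebraMap_smul (Localization S) s]
  rw [show ((algebraMap R (Localization S)) s •
      (Ideal.Quotient.mk (Ideal.map (algebraMap R (Localization S)) I) y)) =
      Ideal.Quotient.mk _ ((algebraMap R (Localization S)) s • y) from
      (Submodule.Quotient.mk_smul _ _ y).symm]
  rw [smul_eq_mul, Ideal.Quotient.eq_zero_iff_mem]
  exact Ideal.mul_mem_right _ _ (Ideal.mem_map_of_mem _ hs)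

lemma kill_lemma (S : Submonoid R) (I : Ideal R) (s : R) (hs : s ∈ I) :
    s • 𝟙 (ModuleCat.of R
      (Localization S ⧸ (Ideal.map (algebraMap R (Localization S)) I))) = 0 := by
  apply ModuleCat.hom_ext
  apply LinearMap.ext
  intro x
  exact kill_aux S I s hs x

lemma iso_lemma (S : Submonoid R) (I : Ideal R) (s : R) (hs : s ∈ S) :
    IsIso (s • 𝟙 (ModuleCat.of R
      (Localization S ⧸ (Ideal.map (algebraMap R (Localization S)) I)))) := by
  obtain ⟨u, hu⟩ := IsLocalization.map_units (Localization S) (⟨s, hs⟩ : S)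
  have key : ∀ x : Localization S ⧸ (Ideal.map (algebraMap R (Localization S)) I),
      (↑u⁻¹ : Localization S) • (s • x) = x := by
    intro x
    rw [← algebraMap_smul (Localization S) s x, ← hu, smul_smul, Units.inv_mul, one_smul]
  have key2 : ∀ x : Localization S ⧸ (Ideal.map (algebraMap R (Localization S)) I),
      s • ((↑u⁻¹ : Localization S) • x) = x := by
    intro x
    rw [← algebraMap_smul (Localization S) s ((↑u⁻¹ : Localization S) • x), ← hu,
      smul_smul, Units.mul_inv, one_smul]
  refine ⟨⟨ModuleCat.ofHom (LinearMap.mk (σ := RingHom.id R) (M := Localization S ⧸ (Ideal.map (algebraMap R (Localization S)) I))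
      (M₂ := Localization S ⧸ (Ideal.map (algebraMap R (Localization S)) I))
      (AddHom.mk (fun x => (↑u⁻¹ : Localization S) • x) (fun a b => smul_add _ a b))
      (fun r x => by
        simp only [RingHom.id_apply]
        rw [← algebraMap_smul (Localization S) (r : R) x,
          ← algebraMap_smul (Localization S) r ((↑u⁻¹ : Localization S) • x),
          smul_smul, smul_smul, mul_comm])), ?_, ?_⟩⟩
  · apply ModuleCat.hom_ext
    apply LinearMap.ext
    intro x
    exact key x
  · apply ModuleCat.hom_ext
    apply LinearMap.ext
    intro x
    exact key2 x

lemma exists_sep {G : Type} [AddCommGroup G] [DecidableEq G] (𝒜 : G → AddSubgroup R)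
    [GradedRing 𝒜] (p q : Ideal R)
    (hphom : Ideal.IsHomogeneous 𝒜 p) (hqhom : Ideal.IsHomogeneous 𝒜 q) (hpq : p ≠ q) :
    ∃ s : R, (∃ g : G, s ∈ 𝒜 g) ∧ ((s ∈ p ∧ s ∉ q) ∨ (s ∈ q ∧ s ∉ p)) := by
  classical
  have main : ∀ (a b : Ideal R), Ideal.IsHomogeneous 𝒜 a → ∀ x, x ∈ a → x ∉ b →
      ∃ s : R, (∃ g : G, s ∈ 𝒜 g) ∧ s ∈ a ∧ s ∉ b := by
    intro a b ha x hxa hxb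
    by_contra h
    push_neg at h
    refine hxb ?_
    rw [← DirectSum.sum_support_decompose 𝒜 x]
    exact Ideal.sum_mem _ (fun g _ => h _ ⟨g, SetLike.coe_mem _⟩ (ha g hxa))
  have hx : ∃ x, (x ∈ p ∧ x ∉ q) ∨ (x ∈ q ∧ x ∉ p) := by
    by_contra h
    push_neg at h
    exact hpq (le_antisymm (fun x hx => (h x).1 hx) (fun x hx => (h x).2 hx))
  obtain ⟨x, ⟨h1, h2⟩ | ⟨h1, h2⟩⟩ := hx
  · obtain ⟨s, hg, h3, h4⟩ := main p q hphom x h1 h2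
    exact ⟨s, hg, Or.inl ⟨h3, h4⟩⟩
  · obtain ⟨s, hg, h3, h4⟩ := main q p hqhom x h1 h2
    exact ⟨s, hg, Or.inr ⟨h3, h4⟩⟩

end Stmt19Proof

end

/-- for a commutative `G`-graded noetherian ring `R` and two distinct
homogeneous primes `p ≠ q`, the derived tensor product `k(p) ⊗^L k(q)` vanishes: since
`k(p)` and `k(q)` are modules, this says that `Torᵢ(k(p), k(q)) = 0` for all `i`
(the forgetful functor from graded modules to modules being exact and monoidal, this is
equivalent to vanishing in the derived category of graded modules). -/
theorem stmt19 {G R : Type} [AddCommGroup G] [DecidableEq G] [CommRing R]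
    (𝒜 : G → AddSubgroup R) [GradedRing 𝒜]
    (hnoeth : ∀ c : ℕ →o {I : Ideal R // Ideal.IsHomogeneous 𝒜 I},
      ∃ n : ℕ, ∀ m : ℕ, n ≤ m → c m = c n)
    (p q : Ideal R) (hp : p.IsPrime) (hq : q.IsPrime)
    (hphom : Ideal.IsHomogeneous 𝒜 p) (hqhom : Ideal.IsHomogeneous 𝒜 q)
    (hpq : p ≠ q)
    (Sp Sq : Submonoid R)
    (hSp : (Sp : Set R) = {s : R | (∃ g : G, s ∈ 𝒜 g) ∧ s ∉ p})
    (hSq : (Sq : Set R) = {s : R | (∃ g : G, s ∈ 𝒜 g) ∧ s ∉ q}) :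
    ∀ i : ℕ,
      Limits.IsZero
        (((Tor (ModuleCat.{0} R) i).obj
            (ModuleCat.of R
              (Localization Sp ⧸ (Ideal.map (algebraMap R (Localization Sp)) p)))).obj
          (ModuleCat.of R
            (Localization Sq ⧸ (Ideal.map (algebraMap R (Localization Sq)) q)))) := by
  intro i
  obtain ⟨s, hsg, hcase⟩ := Stmt19Proof.exists_sep 𝒜 p q hphom hqhom hpq
  show Limits.IsZero
    ((((MonoidalCategory.tensoringLeft (ModuleCat.{0} R)).obj
        (ModuleCat.of R
          (Localization Sp ⧸ (Ideal.map (algebraMap R (Localization Sp)) p)))).leftDerived i).obj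
      (ModuleCat.of R (Localization Sq ⧸ (Ideal.map (algebraMap R (Localization Sq)) q))))
  apply Stmt19Proof.isZero_main _ _ s i
  rcases hcase with ⟨hsp, hsq⟩ | ⟨hsq, hsp⟩
  · left
    constructor
    · exact Stmt19Proof.kill_lemma Sp p s hsp
    · apply Stmt19Proof.iso_lemma
      show s ∈ (Sq : Set R)
      rw [hSq]
      exact ⟨hsg, hsq⟩
  · right
    constructor
    · apply Stmt19Proof.iso_lemma
      show s ∈ (Sp : Set R)
      rw [hSp]
      exact ⟨hsg, hsp⟩
    · exact Stmt19Proof.kill_lemma Sq q s hsq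
end
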